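/- arXiv:math/0606569 — 2 statements merged into one kernel-verified Lean document; each statement's English description precedes it below -/
import Mathlib

section
/- Let X and Y be metric spaces, where Y is P-connected and locally P-contractible for some family P of paths. Then every weakly proper local homeomorphism f : X → Y is a covering projection. -/
open Filter Topology Set

/-- `Y` is `P`-connected for a family `P` of continuous paths `[0,1] → Y`:
the family consists of continuous paths, is closed under reversal, and joins
every pair of points. -/
def PConnected {Y : Type*} [MetricSpace Y] (P : Set (ℝ → Y)) : Prop :=
  (∀ p ∈ P, ContinuousOn p (Set.Icc (0:ℝ) 1)) ∧
  (∀ p ∈ P, (fun t => p (1 - t)) ∈ P) ∧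
  (∀ y y' : Y, ∃ p ∈ P, p 0 = y ∧ p 1 = y')

/-- `Y` is locally `P`-contractible: every `y₀` has an open neighborhood `U`
with a continuous homotopy `H : U × [0,1] → U` fixing `y₀`, contracting `U`
to `y₀`, whose paths `t ↦ H y t` all belong to `P`. -/
def LocallyPContractible {Y : Type*} [MetricSpace Y] (P : Set (ℝ → Y)) : Prop :=
  ∀ y₀ : Y, ∃ U : Set Y, IsOpen U ∧ y₀ ∈ U ∧
    ∃ H : Y → ℝ → Y,
      ContinuousOn (fun p : Y × ℝ => H p.1 p.2) (U ×ˢ Set.Icc (0:ℝ) 1) ∧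
      (∀ y ∈ U, ∀ t ∈ Set.Icc (0:ℝ) 1, H y t ∈ U) ∧
      (∀ t ∈ Set.Icc (0:ℝ) 1, H y₀ t = y₀) ∧
      (∀ y ∈ U, H y 0 = y₀ ∧ H y 1 = y) ∧
      (∀ y ∈ U, (fun t => H y t) ∈ P)

/-- `f` has the continuation property for the path `p : [0,1] → Y`: every partial
lifting `q : [0,b) → X` of `p` admits a sequence `t_n → b` with `q (t_n)` convergent. -/
def ContinuationProperty {X Y : Type*} [MetricSpace X] [MetricSpace Y]
    (f : X → Y) (p : ℝ → Y) : Prop :=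
  ∀ b ∈ Set.Ioc (0:ℝ) 1, ∀ q : ℝ → X, ContinuousOn q (Set.Ico 0 b) →
    (∀ t ∈ Set.Ico 0 b, f (q t) = p t) →
    ∃ tn : ℕ → ℝ, (∀ n, tn n ∈ Set.Ico 0 b) ∧
      Filter.Tendsto tn Filter.atTop (𝓝 b) ∧
      ∃ x : X, Filter.Tendsto (fun n => q (tn n)) Filter.atTop (𝓝 x)

section Aux
variable {X Y : Type*} [MetricSpace X] [MetricSpace Y] {f : X → Y}

lemma auxGlueClosed {Z W : Type*} [TopologicalSpace Z] [TopologicalSpace W]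
    {g : Z → W} {A B : Set Z} (hA : IsClosed A) (hB : IsClosed B)
    (ha : ContinuousOn g A) (hb : ContinuousOn g B) : ContinuousOn g (A ∪ B) := by
  intro x hx
  rcases hx with hxA | hxB
  · by_cases hxB : x ∈ B
    · exact (ha x hxA).union (hb x hxB)
    · exact (ha x hxA).union
        (continuousWithinAt_of_notMem_closure (by rwa [hB.closure_eq]))
  · by_cases hxA : x ∈ A
    · exact (ha x hxA).union (hb x hxB)
    · exact (continuousWithinAt_of_notMem_closure (by rwa [hA.closure_eq])).union
        (hb x hxB)

lemma auxGlueProd {Z : Type*} [TopologicalSpace Z] {W : Set Y} {a b c : ℝ}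
    (hab : a ≤ b) (hbc : b ≤ c) {g : Y × ℝ → Z}
    (h1 : ContinuousOn g (W ×ˢ Icc a b)) (h2 : ContinuousOn g (W ×ˢ Icc b c)) :
    ContinuousOn g (W ×ˢ Icc a c) := by
  have hU : W ×ˢ Icc a c = (W ×ˢ Icc a b) ∪ (W ×ˢ Icc b c) := by
    rw [← Set.prod_union, Icc_union_Icc_eq_Icc hab hbc]
  rw [hU]
  intro z hz
  rcases hz with hz1 | hz2
  · by_cases hz2 : z ∈ W ×ˢ Icc b c
    · exact (h1 z hz1).union (h2 z hz2)
    · refine (h1 z hz1).union (continuousWithinAt_of_notMem_closure ?_)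
      intro hcl
      have hsub : closure (W ×ˢ Icc b c) ⊆ (univ : Set Y) ×ˢ Icc b c :=
        closure_minimal (Set.prod_mono (subset_univ W) subset_rfl)
          (isClosed_univ.prod isClosed_Icc)
      exact hz2 ⟨hz1.1, (hsub hcl).2⟩
  · by_cases hz1 : z ∈ W ×ˢ Icc a b
    · exact (h1 z hz1).union (h2 z hz2)
    · refine (continuousWithinAt_of_notMem_closure ?_).union (h2 z hz2)
      intro hcl
      have hsub : closure (W ×ˢ Icc a b) ⊆ (univ : Set Y) ×ˢ Icc a b :=
        closure_minimal (Set.prod_mono (subset_univ W) subset_rfl)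
          (isClosed_univ.prod isClosed_Icc)
      exact hz1 ⟨hz2.1, (hsub hcl).2⟩

lemma liftUnique (hf : IsLocalHomeomorph f) {s : Set ℝ} (hs : IsPreconnected s)
    {q₁ q₂ : ℝ → X} (h₁ : ContinuousOn q₁ s) (h₂ : ContinuousOn q₂ s)
    (he : ∀ t ∈ s, f (q₁ t) = f (q₂ t)) {a : ℝ} (ha : a ∈ s) (heq : q₁ a = q₂ a) :
    EqOn q₁ q₂ s :=
  (T2Space.isSeparatedMap f).eqOn_of_comp_eqOn hf.isLocallyInjective hs h₁ h₂
    (fun t ht => he t ht) ha heq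

lemma liftExists (hf : IsLocalHomeomorph f)
    (hwp : ∀ K : Set Y, IsCompact K →
      ∀ x ∈ f ⁻¹' K, IsCompact (connectedComponentIn (f ⁻¹' K) x))
    {p : ℝ → Y} (hp : ContinuousOn p (Icc 0 1)) {x0 : X} (h0 : f x0 = p 0) :
    ∃ q : ℝ → X, ContinuousOn q (Icc 0 1) ∧ q 0 = x0 ∧ ∀ t ∈ Icc 0 1, f (q t) = p t := by
  classical
  set S : Set ℝ := {b | b ∈ Icc (0:ℝ) 1 ∧ ∃ q : ℝ → X, ContinuousOn q (Icc 0 b) ∧ q 0 = x0 ∧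
    ∀ t ∈ Icc 0 b, f (q t) = p t} with hSdef
  have h0S : (0:ℝ) ∈ S := ⟨⟨le_refl 0, zero_le_one⟩, fun _ => x0, continuousOn_const, rfl,
    fun t ht => by rw [show t = 0 from le_antisymm ht.2 ht.1]; exact h0⟩
  have hSne : S.Nonempty := ⟨0, h0S⟩
  have hSbdd : BddAbove S := ⟨1, fun b hb => hb.1.2⟩
  have key : ∀ a c : ℝ, a ∈ Icc (0:ℝ) 1 → c ∈ Icc (0:ℝ) 1 → a ≤ c →
      ∀ qa : ℝ → X, ContinuousOn qa (Icc 0 a) → qa 0 = x0 → (∀ t ∈ Icc 0 a, f (qa t) = p t) →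
      ∀ e : OpenPartialHomeomorph X Y, f = ⇑e → qa a ∈ e.source →
      (∀ s ∈ Icc a c, p s ∈ e.target) → c ∈ S := by
    intro a c ha hc hac qa hqac hqa0 hqal e hfe hqas htgt
    have hIccsub : Icc a c ⊆ Icc (0:ℝ) 1 := Icc_subset_Icc ha.1 hc.2
    set r : ℝ → X := fun t => e.symm (p t) with hrdef
    have hrc : ContinuousOn r (Icc a c) :=
      e.continuousOn_symm.comp (hp.mono hIccsub) (fun s hs => htgt s hs)
    have hrl : ∀ s ∈ Icc a c, f (r s) = p s := fun s hs => by
      rw [hfe]; exact e.right_inv (htgt s hs)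
    have hra : r a = qa a := by
      have h1 : f (r a) = p a := hrl a ⟨le_refl a, hac⟩
      have h2 : f (qa a) = p a := hqal a ⟨ha.1, le_refl a⟩
      rw [hfe] at h1 h2
      exact e.injOn (e.map_target (htgt a ⟨le_refl a, hac⟩)) hqas (h1.trans h2.symm)
    set q' : ℝ → X := fun t => if t ≤ a then qa t else r t with hq'def
    have hq'eq1 : EqOn q' qa (Icc 0 a) := fun t ht => if_pos ht.2
    have hq'eq2 : EqOn q' r (Icc a c) := fun t ht => by
      by_cases h : t ≤ a
      · have hta : t = a := le_antisymm h ht.1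
        show (if t ≤ a then qa t else r t) = r t
        rw [if_pos h, hta, hra]
      · exact if_neg h
    have hq'c : ContinuousOn q' (Icc 0 c) := by
      rw [← Icc_union_Icc_eq_Icc ha.1 hac]
      exact auxGlueClosed isClosed_Icc isClosed_Icc (hqac.congr hq'eq1) (hrc.congr hq'eq2)
    refine ⟨hc, q', hq'c, ?_, ?_⟩
    · rw [show q' 0 = qa 0 from if_pos ha.1]; exact hqa0
    · intro t ht
      by_cases h : t ≤ a
      · rw [hq'eq1 ⟨ht.1, h⟩]; exact hqal t ⟨ht.1, h⟩
      · have htm : t ∈ Icc a c := ⟨le_of_not_ge h, ht.2⟩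
        rw [hq'eq2 htm]; exact hrl t htm
  set b := sSup S with hbdef
  have hbmem : b ∈ Icc (0:ℝ) 1 := ⟨le_csSup hSbdd h0S, csSup_le hSne (fun x hx => hx.1.2)⟩
  have hK : IsCompact (p '' Icc 0 1) := (isCompact_Icc).image_of_continuousOn hp
  have hx0K : x0 ∈ f ⁻¹' (p '' Icc 0 1) := by
    rw [mem_preimage, h0]
    exact mem_image_of_mem p ⟨le_refl 0, zero_le_one⟩
  have hC : IsCompact (connectedComponentIn (f ⁻¹' (p '' Icc 0 1)) x0) :=
    hwp _ hK x0 hx0K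
  have hbS : b ∈ S := by
    rcases eq_or_lt_of_le hbmem.1 with heq | hpos
    · rwa [← heq]
    · set tseq : ℕ → ℝ := fun n => b - b * (1 / (n + 1)) with htseqdef
      have htlt : ∀ n, tseq n < b := fun n => by
        have h1 : (0:ℝ) < 1 / (n + 1) := by positivity
        have : 0 < b * (1 / (n + 1)) := by positivity
        simp only [htseqdef]; linarith
      have ht0 : ∀ n, 0 ≤ tseq n := fun n => by
        have h1 : (1:ℝ) / (n + 1) ≤ 1 := by
          rw [div_le_one (by positivity)]; linarith [Nat.cast_nonneg (α := ℝ) n]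
        have : b * (1 / (n + 1)) ≤ b * 1 := by
          apply mul_le_mul_of_nonneg_left h1 (le_of_lt hpos)
        simp only [htseqdef]; linarith
      have htb : Tendsto tseq atTop (𝓝 b) := by
        have h1 : Tendsto (fun n : ℕ => b * (1 / (n + 1))) atTop (𝓝 (b * 0)) :=
          tendsto_one_div_add_atTop_nhds_zero_nat.const_mul b
        have h2 : Tendsto (fun n : ℕ => b - b * (1 / (n + 1))) atTop (𝓝 (b - b * 0)) :=
          tendsto_const_nhds.sub h1
        simpa [htseqdef, one_div] using h2
      have hbn : ∀ n, ∃ bn ∈ S, tseq n < bn := fun n =>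
        exists_lt_of_lt_csSup hSne (htlt n)
      choose bn hbnS htbn using hbn
      have hqn : ∀ n, ∃ q : ℝ → X, ContinuousOn q (Icc 0 (bn n)) ∧ q 0 = x0 ∧
          ∀ t ∈ Icc 0 (bn n), f (q t) = p t := fun n => (hbnS n).2
      choose qn hqnc hqn0 hqnl using hqn
      set u : ℕ → X := fun n => qn n (tseq n) with hudef
      have hsubC : ∀ n, qn n '' (Icc 0 (bn n)) ⊆
          connectedComponentIn (f ⁻¹' (p '' Icc 0 1)) x0 := by
        intro n
        apply IsPreconnected.subset_connectedComponentIn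
        · exact (isPreconnected_Icc).image _ (hqnc n)
        · exact ⟨0, ⟨le_refl 0, ((hbnS n).1).1⟩, hqn0 n⟩
        · rintro x ⟨t, ht, rfl⟩
          rw [mem_preimage, hqnl n t ht]
          exact mem_image_of_mem p (Icc_subset_Icc_right ((hbnS n).1).2 ht)
      have hu : ∀ n, u n ∈ connectedComponentIn (f ⁻¹' (p '' Icc 0 1)) x0 := fun n =>
        hsubC n (mem_image_of_mem _ ⟨ht0 n, le_of_lt (htbn n)⟩)
      obtain ⟨xs, hxsC, φ, hφ, hconv⟩ := hC.tendsto_subseq hu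
      have htbφ : Tendsto (fun n => tseq (φ n)) atTop (𝓝 b) := htb.comp hφ.tendsto_atTop
      have hfxs : f xs = p b := by
        have h1 : Tendsto (fun n => f (u (φ n))) atTop (𝓝 (f xs)) :=
          (hf.continuous.tendsto xs).comp hconv
        have h2 : ∀ n, f (u (φ n)) = p (tseq (φ n)) := fun n =>
          hqnl (φ n) _ ⟨ht0 _, le_of_lt (htbn (φ n))⟩
        have h3 : Tendsto (fun n => p (tseq (φ n))) atTop (𝓝 (p b)) := by
          have hpb : ContinuousWithinAt p (Icc 0 1) b := hp b hbmem
          apply hpb.tendsto.comp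
          apply tendsto_nhdsWithin_of_tendsto_nhds_of_eventually_within _ htbφ
          exact Eventually.of_forall fun n => ⟨ht0 _, le_trans (le_of_lt (htlt _)) hbmem.2⟩
        rw [funext h2] at h1
        exact tendsto_nhds_unique h1 h3
      obtain ⟨e, hxe, hfe⟩ := hf xs
      have hpbt : p b ∈ e.target := by rw [← hfxs, hfe]; exact e.map_source hxe
      have hδ : ∃ δ > 0, Metric.ball b δ ∩ Icc 0 1 ⊆ p ⁻¹' e.target := by
        have h' : p ⁻¹' e.target ∈ 𝓝[Icc (0:ℝ) 1] b :=
          mem_map.mp ((hp b hbmem) (e.open_target.mem_nhds hpbt))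
        rwa [Metric.mem_nhdsWithin_iff] at h'
      obtain ⟨δ, hδ0, hδsub⟩ := hδ
      have ev1 : ∀ᶠ n in atTop, b - δ < tseq (φ n) :=
        htbφ.eventually (eventually_gt_nhds (by linarith))
      have ev2 : ∀ᶠ n in atTop, u (φ n) ∈ e.source :=
        hconv.eventually (e.open_source.mem_nhds hxe)
      obtain ⟨n, h1n, h2n⟩ := (ev1.and ev2).exists
      set a := tseq (φ n) with hadef
      have haIcc : a ∈ Icc (0:ℝ) 1 := ⟨ht0 _, le_trans (le_of_lt (htlt _)) hbmem.2⟩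
      apply key a b haIcc hbmem (le_of_lt (htlt _)) (qn (φ n))
        ((hqnc (φ n)).mono (Icc_subset_Icc_right (le_of_lt (htbn (φ n)))))
        (hqn0 (φ n))
        (fun t ht => hqnl (φ n) t (Icc_subset_Icc_right (le_of_lt (htbn (φ n))) ht))
        e hfe h2n
      intro s hs
      apply hδsub
      constructor
      · rw [Metric.mem_ball, Real.dist_eq, abs_sub_lt_iff]
        constructor <;> [linarith [hs.2]; linarith [hs.1]]
      · exact ⟨le_trans (ht0 _) hs.1, le_trans hs.2 hbmem.2⟩
  have hb1 : b = 1 := by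
    by_contra hne
    have hblt : b < 1 := lt_of_le_of_ne hbmem.2 hne
    obtain ⟨_, qb, hqbc, hqb0, hqbl⟩ := hbS
    obtain ⟨e, hxe, hfe⟩ := hf (qb b)
    have hpbt : p b ∈ e.target := by
      rw [← hqbl b ⟨hbmem.1, le_refl b⟩, hfe]; exact e.map_source hxe
    have hδ : ∃ δ > 0, Metric.ball b δ ∩ Icc 0 1 ⊆ p ⁻¹' e.target := by
      have h' : p ⁻¹' e.target ∈ 𝓝[Icc (0:ℝ) 1] b :=
        mem_map.mp ((hp b hbmem) (e.open_target.mem_nhds hpbt))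
      rwa [Metric.mem_nhdsWithin_iff] at h'
    obtain ⟨δ, hδ0, hδsub⟩ := hδ
    set c := min 1 (b + δ / 2) with hcdef
    have hbc : b ≤ c := le_min hbmem.2 (by linarith)
    have hcIcc : c ∈ Icc (0:ℝ) 1 :=
      ⟨le_trans hbmem.1 hbc, min_le_left _ _⟩
    have hcS : c ∈ S := by
      apply key b c hbmem hcIcc hbc qb hqbc hqb0 hqbl e hfe hxe
      intro s hs
      apply hδsub
      refine ⟨?_, le_trans hbmem.1 hs.1, le_trans hs.2 hcIcc.2⟩
      rw [Metric.mem_ball, Real.dist_eq, abs_sub_lt_iff]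
      have hsc : s ≤ b + δ / 2 := le_trans hs.2 (min_le_right _ _)
      constructor <;> [linarith; linarith [hs.1]]
    have : c ≤ b := le_csSup hSbdd hcS
    have hbltc : b < c := lt_min hblt (by linarith)
    linarith
  obtain ⟨_, q, hqc, hq0, hql⟩ := hbS
  rw [hb1] at hqc hql
  exact ⟨q, hqc, hq0, hql⟩

lemma liftCont (hf : IsLocalHomeomorph f) {U : Set Y} (hU : IsOpen U)
    {H : Y → ℝ → Y}
    (hHcont : ContinuousOn (fun z : Y × ℝ => H z.1 z.2) (U ×ˢ Icc (0:ℝ) 1))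
    {x0 : X} {g : Y → ℝ → X}
    (hgc : ∀ y' ∈ U, ContinuousOn (g y') (Icc 0 1))
    (hgl : ∀ y' ∈ U, ∀ t ∈ Icc (0:ℝ) 1, f (g y' t) = H y' t)
    (hg0 : ∀ y' ∈ U, g y' 0 = x0)
    {y₁ : Y} (hy₁ : y₁ ∈ U) :
    ∃ W : Set Y, IsOpen W ∧ y₁ ∈ W ∧ W ⊆ U ∧
      ContinuousOn (fun z : Y × ℝ => g z.1 z.2) (W ×ˢ Icc 0 1) := by
  classical
  set G : Y × ℝ → X := fun z => g z.1 z.2 with hGdef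
  set T : Set ℝ := {t | t ∈ Icc (0:ℝ) 1 ∧ ∃ W, IsOpen W ∧ y₁ ∈ W ∧ W ⊆ U ∧
    ContinuousOn G (W ×ˢ Icc 0 t)} with hTdef
  have h0T : (0:ℝ) ∈ T := by
    refine ⟨⟨le_refl 0, zero_le_one⟩, U, hU, hy₁, subset_rfl, ?_⟩
    have heq : EqOn G (fun _ => x0) (U ×ˢ Icc (0:ℝ) 0) := by
      intro z hz
      have hz2 : z.2 = 0 := le_antisymm hz.2.2 hz.2.1
      show g z.1 z.2 = x0
      rw [hz2]; exact hg0 z.1 hz.1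
    exact continuousOn_const.congr heq
  have hTne : T.Nonempty := ⟨0, h0T⟩
  have hTbdd : BddAbove T := ⟨1, fun t ht => ht.1.2⟩
  have hcontHy : ∀ y'' ∈ U, ContinuousOn (fun s => H y'' s) (Icc (0:ℝ) 1) := by
    intro y'' hy''U
    exact hHcont.comp ((continuous_const.prodMk continuous_id).continuousOn)
      (fun s hs => ⟨hy''U, hs⟩)
  have prop : ∀ t₀ t₁ : ℝ, t₀ ∈ T → t₁ ∈ Icc (0:ℝ) 1 → t₀ ≤ t₁ →
      ∀ e : OpenPartialHomeomorph X Y, f = ⇑e → g y₁ t₀ ∈ e.source →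
      (∀ s ∈ Icc t₀ t₁, H y₁ s ∈ e.target) → t₁ ∈ T := by
    intro t₀ t₁ ht₀ ht₁ ht01 e hfe hsrc htgt
    obtain ⟨ht₀I, W₀, hW₀o, hy₁W₀, hW₀U, hcont₀⟩ := ht₀
    have hIccsub : Icc t₀ t₁ ⊆ Icc (0:ℝ) 1 := Icc_subset_Icc ht₀I.1 ht₁.2
    -- A1: neighborhood where the lift at time t₀ is in the chart source
    have hz₀ : (y₁, t₀) ∈ W₀ ×ˢ Icc (0:ℝ) t₀ := ⟨hy₁W₀, ht₀I.1, le_refl _⟩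
    have hpre : G ⁻¹' e.source ∈ 𝓝[W₀ ×ˢ Icc (0:ℝ) t₀] (y₁, t₀) :=
      mem_map.mp ((hcont₀ (y₁, t₀) hz₀) (e.open_source.mem_nhds hsrc))
    rw [mem_nhdsWithin] at hpre
    obtain ⟨O, hOo, hOz, hOsub⟩ := hpre
    set W₁ : Set Y := {y'' | (y'', t₀) ∈ O} with hW₁def
    have hW₁o : IsOpen W₁ := hOo.preimage (continuous_id.prodMk continuous_const)
    have hy₁W₁ : y₁ ∈ W₁ := hOz
    have hW₁src : ∀ y'' ∈ W₁ ∩ W₀, g y'' t₀ ∈ e.source := fun y'' h =>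
      hOsub ⟨h.1, h.2, ht₀I.1, le_refl _⟩
    -- A2: tube lemma
    have htube : ∀ᶠ y'' in 𝓝 y₁, ∀ s ∈ Icc t₀ t₁,
        (y'' ∈ U → s ∈ Icc (0:ℝ) 1 → H y'' s ∈ e.target) := by
      apply (isCompact_Icc (a := t₀) (b := t₁)).eventually_forall_of_forall_eventually
      intro s hs
      have hsI : s ∈ Icc (0:ℝ) 1 := hIccsub hs
      have hpre2 : (fun z : Y × ℝ => H z.1 z.2) ⁻¹' e.target ∈ 𝓝[U ×ˢ Icc (0:ℝ) 1] (y₁, s) :=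
        mem_map.mp ((hHcont (y₁, s) ⟨hy₁, hsI⟩) (e.open_target.mem_nhds (htgt s hs)))
      rw [mem_nhdsWithin] at hpre2
      obtain ⟨O₂, hO₂o, hO₂z, hO₂sub⟩ := hpre2
      filter_upwards [hO₂o.mem_nhds hO₂z] with z hz hzU hzI
      exact hO₂sub ⟨hz, hzU, hzI⟩
    obtain ⟨W₂, hW₂p, hW₂o, hy₁W₂⟩ := eventually_nhds_iff.mp htube
    set W : Set Y := (W₀ ∩ W₁) ∩ (W₂ ∩ U) with hWdef
    have hWo : IsOpen W := ((hW₀o.inter hW₁o).inter (hW₂o.inter hU))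
    have hy₁W : y₁ ∈ W := ⟨⟨hy₁W₀, hy₁W₁⟩, hy₁W₂, hy₁⟩
    have hWU : W ⊆ U := fun _ h => h.2.2
    have htgt'' : ∀ y'' ∈ W, ∀ s ∈ Icc t₀ t₁, H y'' s ∈ e.target := fun y'' hy'' s hs =>
      hW₂p y'' hy''.2.1 s hs hy''.2.2 (hIccsub hs)
    have hEq : ∀ y'' ∈ W, ∀ s ∈ Icc t₀ t₁, g y'' s = e.symm (H y'' s) := by
      intro y'' hy'' s hs
      have hy''U : y'' ∈ U := hy''.2.2
      have cont₁ : ContinuousOn (g y'') (Icc t₀ t₁) := (hgc y'' hy''U).mono hIccsub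
      have cont₂ : ContinuousOn (fun s' => e.symm (H y'' s')) (Icc t₀ t₁) :=
        e.continuousOn_symm.comp ((hcontHy y'' hy''U).mono hIccsub)
          (fun s' hs' => htgt'' y'' hy'' s' hs')
      have he : ∀ s' ∈ Icc t₀ t₁, f (g y'' s') = f (e.symm (H y'' s')) := by
        intro s' hs'
        rw [hgl y'' hy''U s' (hIccsub hs'), hfe, e.right_inv (htgt'' y'' hy'' s' hs')]
      have heqt₀ : g y'' t₀ = e.symm (H y'' t₀) := by
        have hmem₁ : g y'' t₀ ∈ e.source := hW₁src y'' ⟨hy''.1.2, hy''.1.1⟩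
        have hmem₂ : e.symm (H y'' t₀) ∈ e.source :=
          e.map_target (htgt'' y'' hy'' t₀ ⟨le_refl _, ht01⟩)
        apply e.injOn hmem₁ hmem₂
        rw [← hfe]
        exact he t₀ ⟨le_refl _, ht01⟩
      exact liftUnique hf isPreconnected_Icc cont₁ cont₂ he ⟨le_refl t₀, ht01⟩ heqt₀ hs
    have hc2 : ContinuousOn G (W ×ˢ Icc t₀ t₁) := by
      have hsub : W ×ˢ Icc t₀ t₁ ⊆ U ×ˢ Icc (0:ℝ) 1 := Set.prod_mono hWU hIccsub
      have hcsym : ContinuousOn (fun z : Y × ℝ => e.symm (H z.1 z.2)) (W ×ˢ Icc t₀ t₁) :=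
        e.continuousOn_symm.comp (hHcont.mono hsub)
          (fun z hz => htgt'' z.1 hz.1 z.2 hz.2)
      exact hcsym.congr (fun z hz => hEq z.1 hz.1 z.2 hz.2)
    refine ⟨ht₁, W, hWo, hy₁W, hWU, ?_⟩
    exact auxGlueProd ht₀I.1 ht01
      (hcont₀.mono (Set.prod_mono (fun _ h => h.1.1) subset_rfl)) hc2
  set ts := sSup T with htsdef
  have htsI : ts ∈ Icc (0:ℝ) 1 := ⟨le_csSup hTbdd h0T, csSup_le hTne (fun t ht => ht.1.2)⟩
  have hstep : ts ∈ T := by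
    obtain ⟨e, hxe, hfe⟩ := hf (g y₁ ts)
    have hHt : H y₁ ts ∈ e.target := by
      rw [← hgl y₁ hy₁ ts htsI, hfe]; exact e.map_source hxe
    have h1 : (g y₁) ⁻¹' e.source ∈ 𝓝[Icc (0:ℝ) 1] ts :=
      mem_map.mp ((hgc y₁ hy₁ ts htsI) (e.open_source.mem_nhds hxe))
    have h2 : (fun s => H y₁ s) ⁻¹' e.target ∈ 𝓝[Icc (0:ℝ) 1] ts :=
      mem_map.mp ((hcontHy y₁ hy₁ ts htsI) (e.open_target.mem_nhds hHt))
    have h3 := inter_mem h1 h2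
    rw [Metric.mem_nhdsWithin_iff] at h3
    obtain ⟨δ, hδ0, hδsub⟩ := h3
    obtain ⟨t₀, ht₀T, ht₀gt⟩ : ∃ t₀ ∈ T, ts - δ < t₀ :=
      exists_lt_of_lt_csSup hTne (by linarith)
    have ht₀le : t₀ ≤ ts := le_csSup hTbdd ht₀T
    have hball : ∀ s, t₀ ≤ s → s ≤ ts → s ∈ Metric.ball ts δ ∩ Icc (0:ℝ) 1 := by
      intro s h1s h2s
      refine ⟨?_, le_trans ht₀T.1.1 h1s, le_trans h2s htsI.2⟩
      rw [Metric.mem_ball, Real.dist_eq, abs_sub_lt_iff]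
      constructor <;> linarith
    refine prop t₀ ts ht₀T htsI ht₀le e hfe ?_ ?_
    · exact (hδsub (hball t₀ (le_refl _) ht₀le)).1
    · exact fun s hs => (hδsub (hball s hs.1 hs.2)).2
  have hts1 : ts = 1 := by
    by_contra hne
    have hlt : ts < 1 := lt_of_le_of_ne htsI.2 hne
    obtain ⟨e, hxe, hfe⟩ := hf (g y₁ ts)
    have hHt : H y₁ ts ∈ e.target := by
      rw [← hgl y₁ hy₁ ts htsI, hfe]; exact e.map_source hxe
    have h2 : (fun s => H y₁ s) ⁻¹' e.target ∈ 𝓝[Icc (0:ℝ) 1] ts :=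
      mem_map.mp ((hcontHy y₁ hy₁ ts htsI) (e.open_target.mem_nhds hHt))
    rw [Metric.mem_nhdsWithin_iff] at h2
    obtain ⟨δ, hδ0, hδsub⟩ := h2
    set t₁ := min 1 (ts + δ / 2) with ht₁def
    have htst₁ : ts ≤ t₁ := le_min htsI.2 (by linarith)
    have ht₁I : t₁ ∈ Icc (0:ℝ) 1 := ⟨le_trans htsI.1 htst₁, min_le_left _ _⟩
    have ht₁T : t₁ ∈ T := by
      refine prop ts t₁ hstep ht₁I htst₁ e hfe hxe ?_
      intro s hs
      refine (hδsub ⟨?_, le_trans htsI.1 hs.1, le_trans hs.2 ht₁I.2⟩ : _)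
      rw [Metric.mem_ball, Real.dist_eq, abs_sub_lt_iff]
      have : s ≤ ts + δ / 2 := le_trans hs.2 (min_le_right _ _)
      constructor <;> [linarith; linarith [hs.1]]
    have h1 : t₁ ≤ ts := le_csSup hTbdd ht₁T
    have h2' : ts < t₁ := lt_min hlt (by linarith)
    linarith
  rw [hts1] at hstep
  obtain ⟨_, W, hWo, hyW, hWU, hWc⟩ := hstep
  exact ⟨W, hWo, hyW, hWU, hWc⟩

lemma fiberDiscrete (hf : IsLocalHomeomorph f) (y : Y) :
    DiscreteTopology ↥(f ⁻¹' {y}) := by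
  rw [discreteTopology_iff_isOpen_singleton]
  rintro ⟨x, hx⟩
  obtain ⟨e, hxe, hfe⟩ := hf x
  have hset : ({⟨x, hx⟩} : Set ↥(f ⁻¹' {y})) = Subtype.val ⁻¹' e.source := by
    ext ⟨x', hx'⟩
    simp only [mem_singleton_iff, mem_preimage, Subtype.mk.injEq]
    constructor
    · rintro rfl; exact hxe
    · intro hx'e
      apply e.injOn hx'e hxe
      rw [← hfe]
      have h1 : f x' = y := hx'
      have h2 : f x = y := hx
      rw [h1, h2]
  rw [hset]
  exact e.open_source.preimage continuous_subtype_val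

lemma evenlyEmpty [IsEmpty X] (f : X → Y) (y : Y) : IsEvenlyCovered f y (f ⁻¹' {y}) := by
  haveI : IsEmpty ↥(f ⁻¹' {y}) := ⟨fun x => IsEmpty.false (x : X)⟩
  haveI : DiscreteTopology ↥(f ⁻¹' {y}) :=
    discreteTopology_iff_isOpen_singleton.mpr (fun a => isEmptyElim a)
  exact IsEvenlyCovered.of_trivialization (I := ↥(f ⁻¹' {y})) (t :=
          { toFun := fun x => isEmptyElim x
            invFun := fun z => isEmptyElim z.2
            source := univ
            target := univ ×ˢ univ
            map_source' := fun x _ => isEmptyElim x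
            map_target' := fun z _ => isEmptyElim z.2
            left_inv' := fun x _ => isEmptyElim x
            right_inv' := fun z _ => isEmptyElim z.2
            open_source := isOpen_univ
            open_target := isOpen_univ.prod isOpen_univ
            continuousOn_toFun := fun x _ => isEmptyElim x
            continuousOn_invFun := fun z _ => isEmptyElim z.2
            baseSet := univ
            open_baseSet := isOpen_univ
            source_eq := by simp
            target_eq := rfl
            proj_toFun := fun x _ => isEmptyElim x }) (mem_univ y)

lemma evenlyAt (hf : IsLocalHomeomorph f)
    (hwp : ∀ K : Set Y, IsCompact K →
      ∀ x ∈ f ⁻¹' K, IsCompact (connectedComponentIn (f ⁻¹' K) x))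
    {y : Y} {U : Set Y} (hU : IsOpen U) (hyU : y ∈ U)
    {H : Y → ℝ → Y}
    (hHcont : ContinuousOn (fun z : Y × ℝ => H z.1 z.2) (U ×ˢ Icc (0:ℝ) 1))
    (hH01 : ∀ y' ∈ U, H y' 0 = y ∧ H y' 1 = y')
    (hfib : (f ⁻¹' {y}).Nonempty) :
    IsEvenlyCovered f y (f ⁻¹' {y}) := by
  classical
  haveI hdisc : DiscreteTopology ↥(f ⁻¹' {y}) := fiberDiscrete hf y
  have hone : (1:ℝ) ∈ Icc (0:ℝ) 1 := ⟨zero_le_one, le_refl 1⟩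
  have hzero : (0:ℝ) ∈ Icc (0:ℝ) 1 := ⟨le_refl 0, zero_le_one⟩
  have hrevmem : ∀ t ∈ Icc (0:ℝ) 1, (1:ℝ) - t ∈ Icc (0:ℝ) 1 := fun t ht =>
    ⟨by linarith [ht.2], by linarith [ht.1]⟩
  have hcontHy : ∀ y' ∈ U, ContinuousOn (fun t => H y' t) (Icc (0:ℝ) 1) := fun y' hy' =>
    hHcont.comp ((continuous_const.prodMk continuous_id).continuousOn)
      (fun s hs => ⟨hy', hs⟩)
  have hcontHyrev : ∀ y' ∈ U, ContinuousOn (fun t => H y' (1 - t)) (Icc (0:ℝ) 1) :=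
    fun y' hy' => (hcontHy y' hy').comp
      (continuous_const.sub continuous_id).continuousOn hrevmem
  -- forward lifts
  have hGex : ∀ (x0 : X) (y' : Y), ∃ q : ℝ → X, (y' ∈ U ∧ f x0 = y) →
      (ContinuousOn q (Icc 0 1) ∧ q 0 = x0 ∧ ∀ t ∈ Icc (0:ℝ) 1, f (q t) = H y' t) := by
    intro x0 y'
    by_cases hc : y' ∈ U ∧ f x0 = y
    · have h0 : f x0 = H y' 0 := by rw [hc.2, (hH01 y' hc.1).1]
      obtain ⟨q, hq⟩ := liftExists hf hwp (hcontHy y' hc.1) h0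
      exact ⟨q, fun _ => hq⟩
    · exact ⟨fun _ => x0, fun h => absurd h hc⟩
  choose G hG using hGex
  -- reverse lifts
  have hRex : ∀ x' : X, ∃ r : ℝ → X, f x' ∈ U →
      (ContinuousOn r (Icc 0 1) ∧ r 0 = x' ∧
        ∀ t ∈ Icc (0:ℝ) 1, f (r t) = H (f x') (1 - t)) := by
    intro x'
    by_cases hc : f x' ∈ U
    · have h0 : f x' = H (f x') (1 - 0) := by
        rw [show (1:ℝ) - 0 = 1 by ring, (hH01 _ hc).2]
      obtain ⟨r, hr⟩ := liftExists hf hwp (hcontHyrev _ hc) h0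
      exact ⟨r, fun _ => hr⟩
    · exact ⟨fun _ => x', fun h => absurd h hc⟩
  choose R hR using hRex
  set L : X → Y → X := fun x0 y' => G x0 y' 1 with hLdef
  set ρ : X → X := fun x' => R x' 1 with hρdef
  have fL : ∀ x0 y', f x0 = y → y' ∈ U → f (L x0 y') = y' := by
    intro x0 y' hx0 hy'
    have h := (hG x0 y' ⟨hy', hx0⟩).2.2 1 hone
    show f (G x0 y' 1) = y'
    rw [h, (hH01 y' hy').2]
  have fρ : ∀ x', f x' ∈ U → f (ρ x') = y := by
    intro x' h
    have h2 := (hR x' h).2.2 1 hone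
    show f (R x' 1) = y
    rw [h2, show (1:ℝ) - 1 = 0 by ring, (hH01 _ h).1]
  have keyLρ : ∀ x', f x' ∈ U → L (ρ x') (f x') = x' := by
    intro x' h
    obtain ⟨hRc, hR0, hRl⟩ := hR x' h
    have hρfib : f (ρ x') = y := fρ x' h
    obtain ⟨hGc, hG0, hGl⟩ := hG (ρ x') (f x') ⟨h, hρfib⟩
    set s : ℝ → X := fun t => R x' (1 - t) with hsdef
    have hsc : ContinuousOn s (Icc 0 1) :=
      hRc.comp (continuous_const.sub continuous_id).continuousOn hrevmem
    have hsl : ∀ t ∈ Icc (0:ℝ) 1, f (s t) = H (f x') t := by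
      intro t ht
      have h2 := hRl (1 - t) (hrevmem t ht)
      show f (R x' (1 - t)) = H (f x') t
      rw [h2, show (1:ℝ) - (1 - t) = t by ring]
    have heq0 : G (ρ x') (f x') 0 = s 0 := by
      rw [hG0]
      show ρ x' = R x' (1 - 0)
      rw [show (1:ℝ) - 0 = 1 by ring]
    have heqn := liftUnique hf isPreconnected_Icc hGc hsc
      (fun t ht => by rw [hGl t ht, hsl t ht]) hzero heq0 hone
    show G (ρ x') (f x') 1 = x'
    rw [heqn]
    show R x' (1 - 1) = x'
    rw [show (1:ℝ) - 1 = 0 by ring, hR0]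
  have keyρL : ∀ x0 y', f x0 = y → y' ∈ U → ρ (L x0 y') = x0 := by
    intro x0 y' hx0 hy'
    have hfL : f (L x0 y') = y' := fL x0 y' hx0 hy'
    have hLU : f (L x0 y') ∈ U := by rw [hfL]; exact hy'
    obtain ⟨hRc, hR0, hRl⟩ := hR (L x0 y') hLU
    obtain ⟨hGc, hG0, hGl⟩ := hG x0 y' ⟨hy', hx0⟩
    set s : ℝ → X := fun t => G x0 y' (1 - t) with hsdef
    have hsc : ContinuousOn s (Icc 0 1) :=
      hGc.comp (continuous_const.sub continuous_id).continuousOn hrevmem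
    have hsl : ∀ t ∈ Icc (0:ℝ) 1, f (s t) = H y' (1 - t) := fun t ht =>
      hGl (1 - t) (hrevmem t ht)
    have hRl' : ∀ t ∈ Icc (0:ℝ) 1, f (R (L x0 y') t) = H y' (1 - t) := fun t ht => by
      rw [hRl t ht, hfL]
    have heq0 : R (L x0 y') 0 = s 0 := by
      rw [hR0]
      show L x0 y' = G x0 y' (1 - 0)
      rw [show (1:ℝ) - 0 = 1 by ring]
    have heqn := liftUnique hf isPreconnected_Icc hRc hsc
      (fun t ht => by rw [hRl' t ht, hsl t ht]) hzero heq0 hone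
    show R (L x0 y') 1 = x0
    rw [heqn]
    show G x0 y' (1 - 1) = x0
    rw [show (1:ℝ) - 1 = 0 by ring, hG0]
  have hLcont : ∀ x0, f x0 = y → ContinuousOn (L x0) U := by
    intro x0 hx0 y₁ hy₁
    obtain ⟨W, hWo, hyW, hWU, hWc⟩ := liftCont hf hU hHcont
      (g := fun y' t => G x0 y' t)
      (fun y' hy' => (hG x0 y' ⟨hy', hx0⟩).1)
      (fun y' hy' t ht => (hG x0 y' ⟨hy', hx0⟩).2.2 t ht)
      (fun y' hy' => (hG x0 y' ⟨hy', hx0⟩).2.1) hy₁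
    have hcW : ContinuousOn (L x0) W :=
      hWc.comp ((continuous_id.prodMk continuous_const).continuousOn)
        (fun y' hy' => ⟨hy', hone⟩)
    have hi : ContinuousWithinAt (L x0) (U ∩ W) y₁ := (hcW y₁ hyW).mono inter_subset_right
    exact (continuousWithinAt_inter' (nhdsWithin_le_nhds (hWo.mem_nhds hyW))).mp hi
  have hLocConst : ∀ x', f x' ∈ U → ∃ N : Set X, IsOpen N ∧ x' ∈ N ∧
      ∀ x'' ∈ N, f x'' ∈ U ∧ ρ x'' = ρ x' := by
    intro x' hx'U
    have hx0fib : f (ρ x') = y := fρ x' hx'U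
    obtain ⟨e, hxe', hfe⟩ := hf x'
    have hLx : L (ρ x') (f x') = x' := keyLρ x' hx'U
    have hmm : L (ρ x') (f x') ∈ e.source := by rw [hLx]; exact hxe'
    have hpre : (L (ρ x')) ⁻¹' e.source ∈ 𝓝[U] (f x') :=
      mem_map.mp ((hLcont (ρ x') hx0fib (f x') hx'U) (e.open_source.mem_nhds hmm))
    rw [mem_nhdsWithin] at hpre
    obtain ⟨O, hOo, hOx, hOsub⟩ := hpre
    have hV'o : IsOpen (O ∩ U) := hOo.inter hU
    have hV'prop : ∀ y'' ∈ O ∩ U, L (ρ x') y'' ∈ e.source := fun y'' h => hOsub ⟨h.1, h.2⟩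
    refine ⟨e.source ∩ f ⁻¹' (O ∩ U),
      e.open_source.inter (hV'o.preimage hf.continuous), ⟨hxe', hOx, hx'U⟩, ?_⟩
    intro x'' hx''
    have hy'' : f x'' ∈ O ∩ U := hx''.2
    have hy''U : f x'' ∈ U := hy''.2
    have hxx : x'' = L (ρ x') (f x'') := by
      apply e.injOn hx''.1 (hV'prop _ hy'')
      rw [← hfe, fL _ (f x'') hx0fib hy''U]
    refine ⟨hy''U, ?_⟩
    calc ρ x'' = ρ (L (ρ x') (f x'')) := by rw [← hxx]
    _ = ρ x' := keyρL _ (f x'') hx0fib hy''U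
  -- construct the trivialization
  have hmemF : ∀ x0 : ↥(f ⁻¹' {y}), f (x0 : X) = y := fun x0 => x0.2
  set dflt : ↥(f ⁻¹' {y}) := ⟨hfib.choose, hfib.choose_spec⟩ with hdflt
  set ρ' : X → ↥(f ⁻¹' {y}) := fun x' =>
    if h : f x' ∈ U then ⟨ρ x', by
      rw [mem_preimage, mem_singleton_iff]; exact fρ x' h⟩
    else dflt with hρ'def
  have hρ'val : ∀ x', f x' ∈ U → (ρ' x' : X) = ρ x' := by
    intro x' h
    simp only [hρ'def, dif_pos h]
  have hρ'cont : ∀ x' ∈ f ⁻¹' U, ContinuousAt ρ' x' := by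
    intro x' hx'
    obtain ⟨N, hNo, hxN, hNp⟩ := hLocConst x' hx'
    have hev : ∀ᶠ x'' in 𝓝 x', ρ' x'' = ρ' x' := by
      filter_upwards [hNo.mem_nhds hxN] with x'' hx''
      obtain ⟨hU'', hρeq⟩ := hNp x'' hx''
      apply Subtype.ext
      rw [hρ'val x'' hU'', hρ'val x' hx', hρeq]
    have hev' : (fun _ : X => ρ' x') =ᶠ[𝓝 x'] ρ' := by
      filter_upwards [hev] with x'' h using h.symm
    exact continuousAt_const.congr hev'
  exact IsEvenlyCovered.of_trivialization (I := ↥(f ⁻¹' {y})) (t :=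
          { toFun := fun x' => (f x', ρ' x')
            invFun := fun z => L (z.2 : X) z.1
            source := f ⁻¹' U
            target := U ×ˢ univ
            map_source' := fun x' hx' => ⟨hx', mem_univ _⟩
            map_target' := fun z hz => by
              show f (L (z.2 : X) z.1) ∈ U
              rw [fL _ _ (hmemF z.2) hz.1]; exact hz.1
            left_inv' := fun x' hx' => by
              show L ((ρ' x' : X)) (f x') = x'
              rw [hρ'val x' hx']
              exact keyLρ x' hx'
            right_inv' := fun z hz => by
              have h1 : f (L (z.2 : X) z.1) = z.1 := fL _ _ (hmemF z.2) hz.1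
              have h1U : f (L (z.2 : X) z.1) ∈ U := by rw [h1]; exact hz.1
              have h3 : ρ' (L (z.2 : X) z.1) = z.2 := by
                apply Subtype.ext
                rw [hρ'val _ h1U]
                exact keyρL _ _ (hmemF z.2) hz.1
              show (f (L (z.2 : X) z.1), ρ' (L (z.2 : X) z.1)) = z
              rw [h1, h3]
            open_source := hU.preimage hf.continuous
            open_target := hU.prod isOpen_univ
            continuousOn_toFun := by
              apply ContinuousOn.prodMk (hf.continuous.continuousOn)
              exact fun x' hx' => (hρ'cont x' hx').continuousWithinAt
            continuousOn_invFun := by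
              rintro ⟨y₁, i⟩ hz
              have hiopen : IsOpen {w : Y × ↥(f ⁻¹' {y}) | w.2 = i} :=
                (isOpen_discrete {i}).preimage continuous_snd
              rw [← continuousWithinAt_inter'
                (nhdsWithin_le_nhds (hiopen.mem_nhds rfl))]
              have hc : ContinuousWithinAt (fun w : Y × ↥(f ⁻¹' {y}) => L (i : X) w.1)
                  (U ×ˢ univ ∩ {w | w.2 = i}) (y₁, i) :=
                ((hLcont (i : X) (hmemF i)) y₁ hz.1).comp (x := (y₁, i))
                  (continuous_fst.continuousWithinAt)
                    (fun w (hw : w ∈ U ×ˢ univ ∩ {w | w.2 = i}) => hw.1.1)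
              apply hc.congr
              · intro w hw
                show L ((w.2 : X)) w.1 = L (i : X) w.1
                rw [show w.2 = i from hw.2]
              · rfl
            source_eq := rfl
            target_eq := rfl
            proj_toFun := fun x' _ => rfl
            baseSet := U
            open_baseSet := hU }) hyU

end Aux

/-- with `Y` `P`-connected and locally `P`-contractible, every weakly
proper local homeomorphism `f : X → Y` (each connected component of the preimage of
a compact set is compact) is a covering projection. -/
theorem stmt14 {X Y : Type*} [MetricSpace X] [MetricSpace Y]
    (f : X → Y) (hf : IsLocalHomeomorph f)
    (P : Set (ℝ → Y)) (hPc : PConnected P) (hPl : LocallyPContractible P)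
    (hwp : ∀ K : Set Y, IsCompact K →
      ∀ x ∈ f ⁻¹' K, IsCompact (connectedComponentIn (f ⁻¹' K) x)) :
    IsCoveringMap f := by
  intro y
  obtain ⟨U, hU, hyU, H, hHcont, hHmaps, hHy, hH01, hHP⟩ := hPl y
  rcases isEmpty_or_nonempty X with hX | hX
  · exact evenlyEmpty f y
  · have hfib : (f ⁻¹' {y}).Nonempty := by
      obtain ⟨x1⟩ := hX
      obtain ⟨p, hpP, hp0, hp1⟩ := hPc.2.2 (f x1) y
      obtain ⟨q, hqc, hq0, hql⟩ := liftExists hf hwp (hPc.1 p hpP) hp0.symm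
      refine ⟨q 1, ?_⟩
      rw [mem_preimage, mem_singleton_iff, hql 1 ⟨zero_le_one, le_refl 1⟩, hp1]
    exact evenlyAt hf hwp hU hyU hHcont hH01 hfib
end

section
/- Let f : X → Y be a local homeomorphism between metric spaces, X complete, Y path-connected and locally contractible via rectifiable paths. Assume (1) for every bounded subset B of X, inf_{x∈B} D⁻_x f > 0, and (2) there exist y₀ ∈ Y and x₀ ∈ X such that d(f(x), y₀) → ∞ as d(x, x₀) → ∞. Then f is a covering projection. -/
open Filter Topology Set

/-- Lower scalar derivative `D⁻ₓ f = liminf_{z→x, z≠x} d(f z, f x)/d(z,x)` in `[0,∞]`. -/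
noncomputable def lowerDeriv {X Y : Type*} [MetricSpace X] [MetricSpace Y]
    (f : X → Y) (x : X) : ENNReal :=
  Filter.liminf (fun z => edist (f z) (f x) / edist z x) (𝓝[≠] x)

/-- Upper scalar derivative `D⁺ₓ f = limsup_{z→x, z≠x} d(f z, f x)/d(z,x)` in `[0,∞]`. -/
noncomputable def upperDeriv {X Y : Type*} [MetricSpace X] [MetricSpace Y]
    (f : X → Y) (x : X) : ENNReal :=
  Filter.limsup (fun z => edist (f z) (f x) / edist z x) (𝓝[≠] x)

/-- `Y` is locally contractible via rectifiable paths: every point `y₀` has an open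
neighborhood `U` together with a continuous homotopy `H : U × [0,1] → U` with
`H y₀ t = y₀`, `H y 0 = y₀`, `H y 1 = y`, and each path `t ↦ H y t` rectifiable. -/
def LocallyRContractible (Y : Type*) [MetricSpace Y] : Prop :=
  ∀ y₀ : Y, ∃ U : Set Y, IsOpen U ∧ y₀ ∈ U ∧
    ∃ H : Y → ℝ → Y,
      ContinuousOn (fun p : Y × ℝ => H p.1 p.2) (U ×ˢ Set.Icc (0:ℝ) 1) ∧
      (∀ y ∈ U, ∀ t ∈ Set.Icc (0:ℝ) 1, H y t ∈ U) ∧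
      (∀ t ∈ Set.Icc (0:ℝ) 1, H y₀ t = y₀) ∧
      (∀ y ∈ U, H y 0 = y₀ ∧ H y 1 = y) ∧
      (∀ y ∈ U, eVariationOn (H y) (Set.Icc (0:ℝ) 1) ≠ ⊤)

open ENNReal

section Lifting

variable {X Y : Type*} [MetricSpace X] [MetricSpace Y] {f : X → Y}

/-- Uniqueness of lifts along a local homeomorphism, on a preconnected set. -/
theorem lift_unique (hf : IsLocalHomeomorph f) {Z : Type*} [TopologicalSpace Z]
    {s : Set Z} (hs : IsPreconnected s) {g₁ g₂ : Z → X}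
    (h₁ : ContinuousOn g₁ s) (h₂ : ContinuousOn g₂ s)
    (hfg : ∀ t ∈ s, f (g₁ t) = f (g₂ t)) {t₀ : Z} (ht₀ : t₀ ∈ s)
    (h0 : g₁ t₀ = g₂ t₀) : EqOn g₁ g₂ s := by
  have : PreconnectedSpace s := Subtype.preconnectedSpace hs
  set A : Set s := {t : s | g₁ t.1 = g₂ t.1} with hA
  have hc₁ : Continuous (s.restrict g₁) := h₁.restrict
  have hc₂ : Continuous (s.restrict g₂) := h₂.restrict
  have hAclosed : IsClosed A := isClosed_eq hc₁ hc₂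
  have hAopen : IsOpen A := by
    rw [isOpen_iff_forall_mem_open]
    rintro ⟨t, ht⟩ hmem
    obtain ⟨e, he, hfe⟩ := hf (g₁ t)
    refine ⟨(s.restrict g₁) ⁻¹' e.source ∩ (s.restrict g₂) ⁻¹' e.source, ?_, ?_, ?_⟩
    · rintro ⟨u, hu⟩ ⟨hu₁, hu₂⟩
      have : e (g₁ u) = e (g₂ u) := by
        rw [← hfe]; exact hfg u hu
      exact e.injOn hu₁ hu₂ this
    · exact ((e.open_source.preimage hc₁).inter (e.open_source.preimage hc₂))
    · constructor
      · exact he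
      · simpa [Set.restrict, hA] using hmem ▸ he
  have hne : A.Nonempty := ⟨⟨t₀, ht₀⟩, h0⟩
  have := (IsClopen.eq_univ ⟨hAclosed, hAopen⟩ hne : A = univ)
  intro t ht
  have : (⟨t, ht⟩ : s) ∈ A := this ▸ mem_univ _
  exact this

/-- Gluing two continuous functions on adjacent closed intervals. -/
theorem glue_cont {E : Type*} [TopologicalSpace E] {a b c : ℝ} {g₁ g₂ : ℝ → E}
    (h₁ : ContinuousOn g₁ (Icc a b)) (h₂ : ContinuousOn g₂ (Icc b c))
    (heq : g₁ b = g₂ b) :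
    ContinuousOn (fun t => if t ≤ b then g₁ t else g₂ t) (Icc a c) := by
  intro t ht
  have key : ∀ u ∈ Icc a b, (if u ≤ b then g₁ u else g₂ u) = g₁ u := by
    intro u hu; rw [if_pos hu.2]
  have key2 : ∀ u ∈ Icc b c, (if u ≤ b then g₁ u else g₂ u) = g₂ u := by
    intro u hu
    rcases lt_or_eq_of_le hu.1 with h | h
    · rw [if_neg (not_le.mpr h)]
    · rw [← h, if_pos le_rfl, heq, h]
  have c₁ : ContinuousWithinAt (fun t => if t ≤ b then g₁ t else g₂ t) (Icc a b) t := by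
    by_cases hmem : t ∈ Icc a b
    · exact ((h₁ t hmem).congr key (key t hmem))
    · exact continuousWithinAt_of_notMem_closure (by rwa [isClosed_Icc.closure_eq])
  have c₂ : ContinuousWithinAt (fun t => if t ≤ b then g₁ t else g₂ t) (Icc b c) t := by
    by_cases hmem : t ∈ Icc b c
    · exact ((h₂ t hmem).congr key2 (key2 t hmem))
    · exact continuousWithinAt_of_notMem_closure (by rwa [isClosed_Icc.closure_eq])
  refine (c₁.union c₂).mono ?_
  intro u hu
  rcases le_total u b with h | h
  · exact Or.inl ⟨hu.1, h⟩
  · exact Or.inr ⟨h, hu.2⟩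

/-- Pointwise expansion from a lower bound on the lower scalar derivative. -/
theorem expansion {c' : ℝ≥0∞} {z : X} (h : c' < lowerDeriv f z) :
    ∃ ρ > 0, ∀ w ∈ Metric.ball z ρ, c' * edist w z ≤ edist (f w) (f z) := by
  have hev : ∀ᶠ w in 𝓝[≠] z, c' < edist (f w) (f z) / edist w z :=
    eventually_lt_of_lt_liminf h
  rw [eventually_nhdsWithin_iff] at hev
  rw [Metric.eventually_nhds_iff_ball] at hev
  obtain ⟨ρ, hρ, hball⟩ := hev
  refine ⟨ρ, hρ, fun w hw => ?_⟩
  by_cases hwz : w = z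
  · simp [hwz]
  · have := hball w hw hwz
    have hne : edist w z ≠ 0 := by
      simpa [edist_eq_zero] using hwz
    have hnt : edist w z ≠ ⊤ := edist_ne_top _ _
    rw [ENNReal.lt_div_iff_mul_lt (Or.inl hne) (Or.inl hnt)] at this
    exact this.le

end Lifting

/-- A lift of `γ` through a pointwise-expanding map has variation controlled by that of `γ`. -/
theorem lift_var_bound {X Y : Type*} [MetricSpace X] [MetricSpace Y] {f : X → Y}
    {B : Set X} {c' : ℝ≥0∞} (hc'top : c' ≠ ⊤)
    (hexp : ∀ z ∈ B, ∃ ρ > 0, ∀ w ∈ Metric.ball z ρ, c' * edist w z ≤ edist (f w) (f z))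
    {γ : ℝ → Y} {g : ℝ → X} {u T : ℝ} (huT : u ≤ T)
    (hg : ContinuousOn g (Icc u T)) (hgB : ∀ t ∈ Icc u T, g t ∈ B)
    (hlift : ∀ t ∈ Icc u T, f (g t) = γ t) :
    ∀ v ∈ Icc u T, c' * edist (g u) (g v) ≤ eVariationOn γ (Icc u v) := by
  set A : Set ℝ := {v | v ∈ Icc u T ∧
      ∀ w ∈ Icc u v, c' * edist (g u) (g w) ≤ eVariationOn γ (Icc u w)} with hA
  have huA : u ∈ A := by
    refine ⟨⟨le_rfl, huT⟩, fun w hw => ?_⟩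
    have : w = u := le_antisymm hw.2 hw.1
    simp [this]
  have hne : A.Nonempty := ⟨u, huA⟩
  have hbdd : BddAbove A := ⟨T, fun v hv => hv.1.2⟩
  set v' := sSup A with hv'
  have hv'mem : v' ∈ Icc u T := ⟨le_csSup hbdd huA, csSup_le hne fun v hv => hv.1.2⟩
  have hv'A : v' ∈ A := by
    obtain ⟨v, hv_mono, hv_tendsto, hv_mem⟩ := exists_seq_tendsto_sSup hne hbdd
    refine ⟨hv'mem, fun w hw => ?_⟩
    rcases lt_or_eq_of_le hw.2 with hlt | heq
    · obtain ⟨n, hn⟩ : ∃ n, w ≤ v n := by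
        have := (hv_tendsto.eventually_const_lt hlt).exists
        obtain ⟨n, hn⟩ := this
        exact ⟨n, hn.le⟩
      exact (hv_mem n).2 w ⟨hw.1, hn⟩
    · rw [heq]
      have hvle : ∀ n, v n ≤ v' := fun n => le_csSup hbdd (hv_mem n)
      have h1 : ∀ n, c' * edist (g u) (g (v n)) ≤ eVariationOn γ (Icc u v') := by
        intro n
        exact le_trans ((hv_mem n).2 (v n) ⟨(hv_mem n).1.1, le_rfl⟩)
          (eVariationOn.mono γ (Icc_subset_Icc le_rfl (hvle n)))
      have hvin : Tendsto v atTop (𝓝[Icc u T] v') :=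
        tendsto_nhdsWithin_of_tendsto_nhds_of_eventually_within v hv_tendsto
          (Eventually.of_forall fun n => (hv_mem n).1)
      have hgcont : Tendsto (fun n => g (v n)) atTop (𝓝 (g v')) :=
        (hg v' hv'mem).tendsto.comp hvin
      have htt : Tendsto (fun n => c' * edist (g u) (g (v n))) atTop
          (𝓝 (c' * edist (g u) (g v'))) :=
        ENNReal.Tendsto.const_mul (Tendsto.edist tendsto_const_nhds hgcont) (Or.inr hc'top)
      exact le_of_tendsto htt (Eventually.of_forall h1)
  have hv'T : v' = T := by
    by_contra hne'
    have hv'lt : v' < T := lt_of_le_of_ne hv'mem.2 hne'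
    obtain ⟨ρ, hρ, hexp'⟩ := hexp (g v') (hgB v' hv'mem)
    obtain ⟨δ, hδ, hcont⟩ := (Metric.continuousWithinAt_iff.mp (hg v' hv'mem)) ρ hρ
    set w' := min (v' + δ / 2) T with hw'
    have hv'w' : v' < w' := lt_min (by linarith) hv'lt
    have hw'A : w' ∈ A := by
      refine ⟨⟨le_trans hv'mem.1 hv'w'.le, min_le_right _ _⟩, fun w hw => ?_⟩
      rcases le_or_gt w v' with hle | hgt
      · exact hv'A.2 w ⟨hw.1, hle⟩
      · have hwT : w ∈ Icc u T := ⟨hw.1, le_trans hw.2 (min_le_right _ _)⟩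
        have hdist : dist w v' < δ := by
          rw [Real.dist_eq, abs_of_pos (by linarith)]
          have : w ≤ v' + δ / 2 := le_trans hw.2 (min_le_left _ _)
          linarith
        have hball : g w ∈ Metric.ball (g v') ρ := hcont hwT hdist
        have step1 : c' * edist (g u) (g w) ≤
            c' * edist (g u) (g v') + c' * edist (g v') (g w) := by
          rw [← mul_add]
          exact mul_le_mul_right (edist_triangle _ _ _) c'
        have step2 : c' * edist (g u) (g v') ≤ eVariationOn γ (Icc u v') :=
          hv'A.2 v' ⟨hv'mem.1, le_rfl⟩
        have step3 : c' * edist (g v') (g w) ≤ eVariationOn γ (Icc v' w) := by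
          have := hexp' (g w) hball
          rw [edist_comm]
          refine le_trans this ?_
          rw [hlift w hwT, hlift v' hv'mem]
          exact eVariationOn.edist_le γ (x := w) (y := v') ⟨hgt.le, le_rfl⟩
            ⟨le_rfl, hgt.le⟩
        have hadd : eVariationOn γ (Icc u v') + eVariationOn γ (Icc v' w)
            = eVariationOn γ (Icc u w) := by
          have := eVariationOn.Icc_add_Icc γ (s := Icc u w)
            (hv'mem.1 : u ≤ v') hgt.le ⟨hv'mem.1, hgt.le⟩
          rwa [inter_eq_self_of_subset_right (Icc_subset_Icc le_rfl hgt.le),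
            inter_eq_self_of_subset_right (Icc_subset_Icc hv'mem.1 le_rfl),
            inter_self] at this
        calc c' * edist (g u) (g w)
            ≤ c' * edist (g u) (g v') + c' * edist (g v') (g w) := step1
          _ ≤ eVariationOn γ (Icc u v') + eVariationOn γ (Icc v' w) :=
              add_le_add step2 step3
          _ = eVariationOn γ (Icc u w) := hadd
    exact absurd (le_csSup hbdd hw'A) (not_le.mpr hv'w')
  intro v hv
  exact (hv'T ▸ hv'A).2 v hv

section ExistsLift

variable {X Y : Type*} [MetricSpace X] [MetricSpace Y] [CompleteSpace X] {f : X → Y}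

/-- Existence of lifts of rectifiable paths. -/
theorem exists_lift (hf : IsLocalHomeomorph f)
    (h1 : ∀ B : Set X, Bornology.IsBounded B → 0 < ⨅ x ∈ B, lowerDeriv f x)
    (h2 : ∃ (y₀ : Y) (x₀ : X), ∀ R : ℝ, 0 < R → ∃ r : ℝ, 0 < r ∧
      ∀ x : X, r < dist x x₀ → R < dist (f x) y₀)
    {γ : ℝ → Y} (hγc : ContinuousOn γ (Icc 0 1)) (hγv : eVariationOn γ (Icc 0 1) ≠ ⊤)
    {x : X} (hx : f x = γ 0) :
    ∃ g : ℝ → X, ContinuousOn g (Icc 0 1) ∧ g 0 = x ∧ ∀ t ∈ Icc 0 1, f (g t) = γ t := by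
  classical
  obtain ⟨y₀, x₀, h2⟩ := h2
  -- a bound on the path
  obtain ⟨R₀, hR₀⟩ : ∃ R₀, ∀ t ∈ Icc (0:ℝ) 1, dist (γ t) y₀ ≤ R₀ := by
    obtain ⟨R₀, h⟩ := ((isCompact_Icc.image_of_continuousOn hγc).isBounded).subset_closedBall y₀
    exact ⟨R₀, fun t ht => by
      simpa [Metric.mem_closedBall] using h (mem_image_of_mem γ ht)⟩
  obtain ⟨r, hr, hresc⟩ := h2 (max R₀ 0 + 1) (by positivity)
  set B := Metric.closedBall x₀ r with hB
  have hBin : ∀ z : X, (∃ t ∈ Icc (0:ℝ) 1, f z = γ t) → z ∈ B := by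
    rintro z ⟨t, ht, hz⟩
    by_contra h
    have h' : r < dist z x₀ := by
      simpa [hB, Metric.mem_closedBall, not_le] using h
    have h'' := hresc z h'
    rw [hz] at h''
    have h3 := hR₀ t ht
    have h4 : R₀ ≤ max R₀ 0 := le_max_left _ _
    linarith
  -- the expansion constant
  have hc : 0 < ⨅ x ∈ B, lowerDeriv f x := h1 B Metric.isBounded_closedBall
  obtain ⟨c', hc'0, hc'lt⟩ := exists_between hc
  have hc'top : c' ≠ ⊤ := (lt_of_lt_of_le hc'lt le_top).ne
  have hc'0' : c' ≠ 0 := hc'0.ne'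
  have hexp : ∀ z ∈ B, ∃ ρ > 0, ∀ w ∈ Metric.ball z ρ, c' * edist w z ≤ edist (f w) (f z) :=
    fun z hz => expansion (lt_of_lt_of_le hc'lt (iInf₂_le z hz))
  -- the set of reachable times
  set S : Set ℝ := {T | T ∈ Icc (0:ℝ) 1 ∧ ∃ g : ℝ → X, ContinuousOn g (Icc 0 T) ∧
    g 0 = x ∧ ∀ t ∈ Icc 0 T, f (g t) = γ t} with hS
  have h0S : (0:ℝ) ∈ S := by
    refine ⟨⟨le_rfl, zero_le_one⟩, fun _ => x, continuousOn_const, rfl, fun t ht => ?_⟩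
    have : t = 0 := le_antisymm ht.2 ht.1
    rw [this]; exact hx
  have hbdd : BddAbove S := ⟨1, fun T hT => hT.1.2⟩
  have hSne : S.Nonempty := ⟨0, h0S⟩
  have hchoice : ∀ T : ℝ, ∃ g : ℝ → X, T ∈ S →
      ContinuousOn g (Icc 0 T) ∧ g 0 = x ∧ ∀ t ∈ Icc 0 T, f (g t) = γ t := by
    intro T
    by_cases h : T ∈ S
    · obtain ⟨_, g, hg⟩ := h; exact ⟨g, fun _ => hg⟩
    · exact ⟨fun _ => x, fun h' => absurd h' h⟩
  choose G hG using hchoice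
  have hcoh : ∀ T₁ T₂, T₁ ∈ S → T₂ ∈ S → T₁ ≤ T₂ → EqOn (G T₁) (G T₂) (Icc 0 T₁) := by
    intro T₁ T₂ h₁ h₂ h12
    exact lift_unique hf isPreconnected_Icc (hG T₁ h₁).1
      ((hG T₂ h₂).1.mono (Icc_subset_Icc le_rfl h12))
      (fun t ht => by rw [(hG T₁ h₁).2.2 t ht, (hG T₂ h₂).2.2 t (Icc_subset_Icc le_rfl h12 ht)])
      (⟨le_rfl, h₁.1.1⟩ : (0:ℝ) ∈ Icc 0 T₁)
      (by rw [(hG T₁ h₁).2.1, (hG T₂ h₂).2.1])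
  set Ts := sSup S with hTs
  have hTs0 : 0 ≤ Ts := le_csSup hbdd h0S
  have hTs1 : Ts ≤ 1 := csSup_le hSne fun T hT => hT.1.2
  have hTsS : Ts ∈ S := by
    rcases eq_or_lt_of_le hTs0 with heq | hpos
    · rw [← heq]; exact h0S
    set g : ℝ → X := fun t => if h : ∃ T, T ∈ S ∧ t ≤ T then G (Classical.choose h) t else x
      with hgdef
    have hgwd : ∀ {t T}, T ∈ S → 0 ≤ t → t ≤ T → g t = G T t := by
      intro t T hT ht0 htT
      have hex : ∃ T', T' ∈ S ∧ t ≤ T' := ⟨T, hT, htT⟩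
      rw [hgdef]; simp only [dif_pos hex]
      obtain ⟨hT'S, htT'⟩ := Classical.choose_spec hex
      rcases le_total (Classical.choose hex) T with h | h
      · exact hcoh _ _ hT'S hT h ⟨ht0, htT'⟩
      · exact (hcoh _ _ hT hT'S h ⟨ht0, htT⟩).symm
    have hg0 : g 0 = x := by rw [hgwd h0S le_rfl le_rfl]; exact (hG 0 h0S).2.1
    have hkey : ∀ t, t < Ts → ∃ T, T ∈ S ∧ t < T := fun t ht =>
      exists_lt_of_lt_csSup hSne ht
    have hgf : ∀ t, 0 ≤ t → t < Ts → f (g t) = γ t := by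
      intro t ht0 htTs
      obtain ⟨T, hT, h⟩ := hkey t htTs
      rw [hgwd hT ht0 h.le]
      exact (hG T hT).2.2 t ⟨ht0, h.le⟩
    have hgB : ∀ t, 0 ≤ t → t < Ts → g t ∈ B := by
      intro t ht0 htTs
      exact hBin _ ⟨t, ⟨ht0, (lt_of_lt_of_le htTs hTs1).le⟩, hgf t ht0 htTs⟩
    have hgcont : ∀ T ∈ S, ContinuousOn g (Icc 0 T) :=
      fun T hT => (hG T hT).1.congr fun t ht => hgwd hT ht.1 ht.2
    have hvb : ∀ u v, 0 ≤ u → u ≤ v → v < Ts →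
        c' * edist (g u) (g v) ≤ eVariationOn γ (Icc u v) := by
      intro u v hu huv hv
      obtain ⟨T, hT, hvT⟩ := hkey v hv
      refine lift_var_bound hc'top hexp huv
        (((hgcont T hT).mono (Icc_subset_Icc hu hvT.le)).mono (Icc_subset_Icc le_rfl le_rfl))
        (fun t ht => hgB t (hu.trans ht.1) (lt_of_le_of_lt ht.2 hv))
        (fun t ht => hgf t (hu.trans ht.1) (lt_of_le_of_lt ht.2 hv)) v ⟨huv, le_rfl⟩
    -- total variation bounds
    have hEfin : ∀ t, 0 ≤ t → t ≤ 1 → eVariationOn γ (Icc 0 t) ≠ ⊤ := fun t h0 h1' =>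
      (lt_of_le_of_lt (eVariationOn.mono γ (Icc_subset_Icc le_rfl h1'))
        (lt_top_iff_ne_top.mpr hγv)).ne
    -- the filter at Ts from the left
    set l : Filter ℝ := 𝓝[Ico 0 Ts] Ts with hl
    have hlne : l.NeBot := by
      rw [hl, ← mem_closure_iff_nhdsWithin_neBot, closure_Ico hpos.ne]
      exact ⟨hTs0, le_rfl⟩
    have hcauchy : Cauchy (Filter.map g l) := by
      rw [EMetric.cauchy_iff]
      refine ⟨(Filter.map_neBot).ne', ?_⟩
      intro ε hε
      set ε' := min (ε / 2) 1 with hε'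
      have hε'0 : ε' ≠ 0 := by
        simp only [hε', ne_eq, min_eq_iff, not_or]
        constructor <;> intro h
        · rcases h with ⟨h, -⟩
          exact absurd h (by simpa [ENNReal.div_eq_zero_iff] using hε.ne')
        · rcases h with ⟨h, -⟩; exact one_ne_zero h
      have hε'top : ε' ≠ ⊤ := (min_le_right _ _).trans_lt (by norm_num) |>.ne
      have hε'lt : ε' < ε := by
        rcases eq_or_ne ε ⊤ with h | h
        · rw [h]; exact ((min_le_right _ _).trans_lt (by norm_num))
        · exact (min_le_left _ _).trans_lt (ENNReal.half_lt_self hε.ne' h)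
      set η := c' * ε' with hη
      have hη0 : η ≠ 0 := by simp [hη, hc'0', hε'0]
      have hηtop : η ≠ ⊤ := ENNReal.mul_ne_top hc'top hε'top
      -- find s
      set σ := ⨆ t ∈ Ico (0:ℝ) Ts, eVariationOn γ (Icc 0 t) with hσ
      have hσtop : σ ≠ ⊤ := by
        refine (iSup₂_le fun t ht => ?_ : σ ≤ eVariationOn γ (Icc 0 1)).trans_lt
          (lt_top_iff_ne_top.mpr hγv) |>.ne
        exact eVariationOn.mono γ (Icc_subset_Icc le_rfl (ht.2.le.trans hTs1))
      have hεs : ∃ s, s ∈ Ico (0:ℝ) Ts ∧ σ < eVariationOn γ (Icc 0 s) + η := by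
        rcases eq_or_ne σ 0 with hσ0 | hσ0
        · exact ⟨0, ⟨le_rfl, hpos⟩, by
            rw [hσ0]; exact pos_iff_ne_zero.mpr (by simp [hη0])⟩
        · by_contra hcon
          push_neg at hcon
          have h1' : ∀ s ∈ Ico (0:ℝ) Ts, eVariationOn γ (Icc 0 s) ≤ σ - η := fun s hs =>
            ENNReal.le_sub_of_add_le_right hηtop (hcon s hs)
          have h2' : σ ≤ σ - η := iSup₂_le h1'
          exact absurd (h2'.trans_lt (ENNReal.sub_lt_self hσtop hσ0 hη0)) (lt_irrefl σ)
      obtain ⟨s, hsmem, hslt⟩ := hεs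
      have hvar_small : ∀ u v, s ≤ u → u ≤ v → v < Ts → eVariationOn γ (Icc u v) < η := by
        intro u v hsu huv hv
        have hu0 : 0 ≤ u := hsmem.1.trans hsu
        have hadd : eVariationOn γ (Icc 0 u) + eVariationOn γ (Icc u v)
            = eVariationOn γ (Icc 0 v) := by
          have := eVariationOn.Icc_add_Icc γ (s := Icc 0 v) hu0 huv ⟨hu0, huv⟩
          rwa [inter_eq_self_of_subset_right (Icc_subset_Icc le_rfl huv),
            inter_eq_self_of_subset_right (Icc_subset_Icc hu0 le_rfl),
            inter_self] at this
        have hEv : eVariationOn γ (Icc 0 v) ≤ σ :=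
          le_iSup₂ (f := fun t (_ : t ∈ Ico (0:ℝ) Ts) => eVariationOn γ (Icc 0 t)) v
            ⟨hu0.trans huv, hv⟩
        have hEs : eVariationOn γ (Icc 0 s) ≤ eVariationOn γ (Icc 0 u) :=
          eVariationOn.mono γ (Icc_subset_Icc le_rfl hsu)
        have h3' : eVariationOn γ (Icc 0 u) + eVariationOn γ (Icc u v)
            < eVariationOn γ (Icc 0 u) + η := by
          rw [hadd]
          exact lt_of_le_of_lt hEv (hslt.trans_le (add_le_add_left hEs η))
        exact (ENNReal.add_lt_add_iff_left (hEfin u hu0 ((huv.trans hv.le).trans hTs1))).mp h3'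
      refine ⟨g '' Ico s Ts, ?_, ?_⟩
      · apply image_mem_map
        rw [hl, mem_nhdsWithin]
        exact ⟨Ioi s, isOpen_Ioi, hsmem.2, fun t ht => ⟨le_of_lt ht.1, ht.2.2⟩⟩
      · rintro a ⟨u, hu, rfl⟩ b ⟨v, hv, rfl⟩
        have key : ∀ u v, u ∈ Ico s Ts → v ∈ Ico s Ts → u ≤ v → edist (g u) (g v) < ε := by
          intro u v hu hv huv
          have h5 : c' * edist (g u) (g v) ≤ eVariationOn γ (Icc u v) :=
            hvb u v (hsmem.1.trans hu.1) huv hv.2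
          have h6 : c' * edist (g u) (g v) < c' * ε' :=
            lt_of_le_of_lt h5 (hvar_small u v hu.1 huv hv.2)
          have h7 : edist (g u) (g v) < ε' :=
            (ENNReal.mul_lt_mul_iff_right hc'0' hc'top).mp h6
          exact h7.trans hε'lt
        rcases le_total u v with h | h
        · exact key u v hu hv h
        · rw [edist_comm]; exact key v u hv hu h
    obtain ⟨x', hx'⟩ := CompleteSpace.complete hcauchy
    have hgl : Tendsto g l (𝓝 x') := hx'
    set g' : ℝ → X := fun t => if t < Ts then g t else x' with hg'def
    have hg'eq : ∀ t ∈ Ico (0:ℝ) Ts, g' t = g t := fun t ht => if_pos ht.2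
    have hg'Ts : g' Ts = x' := if_neg (lt_irrefl Ts)
    have hg'cont : ContinuousOn g' (Icc 0 Ts) := by
      intro t ht
      rcases lt_or_eq_of_le ht.2 with hlt | heq
      · obtain ⟨T, hT, htT⟩ := hkey t hlt
        have hTTs : T ≤ Ts := le_csSup hbdd hT
        rw [← continuousWithinAt_inter (Iio_mem_nhds htT)]
        have hsub : Icc 0 Ts ∩ Iio T ⊆ Icc 0 T := fun u hu => ⟨hu.1.1, hu.2.le⟩
        refine (((hG T hT).1 t ⟨ht.1, htT.le⟩).mono hsub).congr ?_ ?_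
        · intro u hu
          rw [hg'eq u ⟨hu.1.1, lt_of_lt_of_le hu.2 hTTs⟩]
          exact hgwd hT hu.1.1 hu.2.le
        · rw [hg'eq t ⟨ht.1, hlt⟩]
          exact hgwd hT ht.1 htT.le
      · rw [heq]
        have : Tendsto g' (𝓝[Icc 0 Ts] Ts) (𝓝 x') := by
          rw [← Ico_union_right hTs0, nhdsWithin_union]
          rw [tendsto_sup]
          constructor
          · refine hgl.congr' ?_
            exact (eventually_mem_nhdsWithin).mono fun u hu => (hg'eq u hu).symm
          · rw [nhdsWithin_singleton]
            rw [tendsto_pure_left]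
            intro s hs
            exact mem_of_mem_nhds (by rwa [hg'Ts])
        rw [ContinuousWithinAt, hg'Ts, heq] at *
        exact this
    have hfx' : f x' = γ Ts := by
      have h₁ : Tendsto (fun t => f (g t)) l (𝓝 (f x')) :=
        ((hf.continuous.tendsto x').comp hgl)
      have h₂ : Tendsto (fun t => f (g t)) l (𝓝 (γ Ts)) := by
        have h₃ : Tendsto γ l (𝓝 (γ Ts)) := by
          refine Tendsto.mono_left (hγc Ts ⟨hTs0, hTs1⟩) (nhdsWithin_mono Ts ?_)
          exact fun u hu => ⟨hu.1, hu.2.le.trans hTs1⟩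
        refine h₃.congr' ?_
        exact (eventually_mem_nhdsWithin).mono fun u hu => (hgf u hu.1 hu.2).symm
      exact tendsto_nhds_unique h₁ h₂
    refine ⟨⟨hTs0, hTs1⟩, g', hg'cont, ?_, ?_⟩
    · rw [hg'eq 0 ⟨le_rfl, hpos⟩]; exact hg0
    · intro t ht
      rcases lt_or_eq_of_le ht.2 with hlt | heq
      · rw [hg'eq t ⟨ht.1, hlt⟩]; exact hgf t ht.1 hlt
      · rw [heq, hg'Ts, hfx']
  -- now extend beyond Ts if Ts < 1
  have hTseq : Ts = 1 := by
    by_contra hne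
    have hlt : Ts < 1 := lt_of_le_of_ne hTs1 hne
    obtain ⟨-, g, hgc, hg0, hglift⟩ := hTsS
    obtain ⟨e, he, hfe⟩ := hf (g Ts)
    have hγTs : γ Ts = e (g Ts) := by
      rw [← hglift Ts ⟨hTs0, le_rfl⟩, hfe]
    have htarget : e.target ∈ 𝓝 (γ Ts) := e.open_target.mem_nhds (by
      rw [hγTs]; exact e.map_source he)
    have hpre := (hγc Ts ⟨hTs0, hTs1⟩) htarget
    rw [Filter.mem_map, mem_nhdsWithin] at hpre
    obtain ⟨O, hO, hTsO, hOsub⟩ := hpre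
    obtain ⟨δ, hδ, hball⟩ := Metric.isOpen_iff.mp hO Ts hTsO
    set T' := min (Ts + δ / 2) 1 with hT'
    have hTsT' : Ts < T' := lt_min (by linarith) hlt
    have hT'mem : T' ∈ Icc (0:ℝ) 1 := ⟨hTs0.trans hTsT'.le, min_le_right _ _⟩
    have hsub2 : ∀ t ∈ Icc Ts T', γ t ∈ e.target := by
      intro t ht
      refine hOsub ⟨hball ?_, ⟨hTs0.trans ht.1, ht.2.trans (min_le_right _ _)⟩⟩
      rw [Metric.mem_ball, Real.dist_eq, abs_of_nonneg (by linarith [ht.1])]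
      have : t ≤ Ts + δ / 2 := ht.2.trans (min_le_left _ _)
      linarith
    have hT'S : T' ∈ S := by
      refine ⟨hT'mem, fun t => if t ≤ Ts then g t else e.symm (γ t), ?_, ?_, ?_⟩
      · refine glue_cont hgc (e.continuousOn_symm.comp
          (hγc.mono fun u hu => ⟨hTs0.trans hu.1, hu.2.trans hT'mem.2⟩) hsub2) ?_
        rw [hγTs, e.left_inv he]
      · change (if (0:ℝ) ≤ Ts then g 0 else e.symm (γ 0)) = x
        rw [if_pos hTs0]; exact hg0
      · intro t ht
        change f (if t ≤ Ts then g t else e.symm (γ t)) = γ t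
        by_cases hc : t ≤ Ts
        · rw [if_pos hc]; exact hglift t ⟨ht.1, hc⟩
        · rw [if_neg hc]
          have : γ t ∈ e.target := hsub2 t ⟨(not_le.mp hc).le, ht.2⟩
          rw [hfe]; exact e.right_inv this
    exact absurd (le_csSup hbdd hT'S) (not_le.mpr hTsT')
  obtain ⟨-, g, hgc, hg0, hglift⟩ := hTsS
  rw [hTseq] at hgc hglift
  exact ⟨g, hgc, hg0, hglift⟩

end ExistsLift

section Chain

variable {X Y : Type*} [MetricSpace X] [MetricSpace Y] {f : X → Y}

/-- A tube lemma for continuous maps on `W ×ˢ Icc 0 1`. -/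
theorem tube_lemma' {Z E : Type*} [TopologicalSpace Z] [TopologicalSpace E] {W : Set Z}
    {K : Z × ℝ → E} (hK : ContinuousOn K (W ×ˢ Icc 0 1)) {p₁ : Z} (hp₁ : p₁ ∈ W)
    {C : Set ℝ} (hC : IsCompact C) (hCI : C ⊆ Icc 0 1) {V : Set E} (hV : IsOpen V)
    (h : ∀ t ∈ C, K (p₁, t) ∈ V) :
    ∃ N, IsOpen N ∧ p₁ ∈ N ∧ ∀ p ∈ N ∩ W, ∀ t ∈ C, K (p, t) ∈ V := by
  classical
  have key : ∀ t : ℝ, ∃ (A' : Set Z) (B' : Set ℝ), t ∈ C →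
      (IsOpen A' ∧ IsOpen B' ∧ p₁ ∈ A' ∧ t ∈ B' ∧
        ∀ p ∈ A' ∩ W, ∀ u ∈ B' ∩ Icc 0 1, K (p, u) ∈ V) := by
    intro t
    by_cases ht : t ∈ C
    · have hmem : K ⁻¹' V ∈ 𝓝[W ×ˢ Icc 0 1] (p₁, t) :=
        hK (p₁, t) ⟨hp₁, hCI ht⟩ (hV.mem_nhds (h t ht))
      rw [nhdsWithin_prod_eq, Filter.mem_prod_iff] at hmem
      obtain ⟨A, hA, B, hB, hsub⟩ := hmem
      rw [mem_nhdsWithin] at hA hB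
      obtain ⟨A', hA'o, hpA', hA'sub⟩ := hA
      obtain ⟨B', hB'o, htB', hB'sub⟩ := hB
      refine ⟨A', B', fun _ => ⟨hA'o, hB'o, hpA', htB', ?_⟩⟩
      intro p hp u hu
      exact hsub (⟨hA'sub hp, hB'sub hu⟩ : (p, u) ∈ A ×ˢ B)
    · exact ⟨univ, univ, fun h' => absurd h' ht⟩
  choose A' B' hkey using key
  obtain ⟨T, hTsub, hTfin, hTcov⟩ := hC.elim_finite_subcover_image
    (b := C) (c := fun t => B' t) (fun t ht => (hkey t ht).2.1)
    (fun t ht => mem_biUnion ht (hkey t ht).2.2.2.1)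
  refine ⟨⋂ t ∈ T, A' t, ?_, ?_, ?_⟩
  · exact hTfin.isOpen_biInter fun t ht => (hkey t (hTsub ht)).1
  · exact mem_biInter fun t ht => (hkey t (hTsub ht)).2.2.1
  · intro p hp t ht
    obtain ⟨t₀, ht₀T, htB⟩ := mem_iUnion₂.mp (hTcov ht)
    exact (hkey t₀ (hTsub ht₀T)).2.2.2.2 p ⟨(mem_iInter₂.mp hp.1) t₀ ht₀T, hp.2⟩
      t ⟨htB, hCI ht⟩

/-- Chain-of-charts lemma: lifts of nearby parametrized paths, defined by charts,
depending continuously on the parameter through the first and last charts. -/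
theorem chain_lift (hf : IsLocalHomeomorph f) {Z : Type*} [TopologicalSpace Z]
    {W : Set Z} {K : Z → ℝ → Y}
    (hK : ContinuousOn (fun q : Z × ℝ => K q.1 q.2) (W ×ˢ Icc 0 1))
    {p₁ : Z} (hp₁ : p₁ ∈ W) {g₁ : ℝ → X} (hg₁c : ContinuousOn g₁ (Icc 0 1))
    (hg₁ : ∀ t ∈ Icc 0 1, f (g₁ t) = K p₁ t) :
    ∃ (N : Set Z) (e₀ eN : OpenPartialHomeomorph X Y), IsOpen N ∧ p₁ ∈ N ∧
      f = e₀ ∧ f = eN ∧ g₁ 0 ∈ e₀.source ∧ g₁ 1 ∈ eN.source ∧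
      ∀ p ∈ N ∩ W, K p 0 ∈ e₀.target ∧ K p 1 ∈ eN.target ∧
        ∃ g : ℝ → X, ContinuousOn g (Icc 0 1) ∧ (∀ t ∈ Icc 0 1, f (g t) = K p t) ∧
          g 0 = e₀.symm (K p 0) ∧ g 1 = eN.symm (K p 1) := by
  classical
  -- Lebesgue-type covering of `Icc 0 1` by chart preimages
  have hcov : ∀ t : ℝ, ∃ rt : ℝ, 0 < rt ∧ (t ∈ Icc (0:ℝ) 1 →
      ∃ e : OpenPartialHomeomorph X Y, f = e ∧
        ∀ u ∈ Icc (0:ℝ) 1, dist u t < rt → g₁ u ∈ e.source) := by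
    intro t
    by_cases ht : t ∈ Icc (0:ℝ) 1
    · obtain ⟨e, he, hfe⟩ := hf (g₁ t)
      have hmem := hg₁c t ht (e.open_source.mem_nhds he)
      rw [Filter.mem_map, mem_nhdsWithin] at hmem
      obtain ⟨O, hO, htO, hsub⟩ := hmem
      obtain ⟨rt, hrt, hball⟩ := Metric.isOpen_iff.mp hO t htO
      exact ⟨rt, hrt, fun _ => ⟨e, hfe, fun u hu hd =>
        hsub ⟨hball (Metric.mem_ball.mpr hd), hu⟩⟩⟩
    · exact ⟨1, one_pos, fun h' => absurd h' ht⟩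
  choose rt hrtpos hcov using hcov
  obtain ⟨T, hTsub, hTfin, hTcov⟩ := isCompact_Icc.elim_finite_subcover_image
    (b := Icc (0:ℝ) 1) (c := fun t => Metric.ball t (rt t / 2))
    (fun t _ => Metric.isOpen_ball)
    (fun t ht => mem_biUnion ht (by
      simpa [Metric.mem_ball] using half_pos (hrtpos t)))
  have hTne : T.Nonempty := by
    rcases eq_empty_or_nonempty T with h | h
    · exfalso
      have := hTcov (⟨le_rfl, zero_le_one⟩ : (0:ℝ) ∈ Icc 0 1)
      simp [h] at this
    · exact h
  obtain ⟨δ, hδpos, hδle⟩ : ∃ δ : ℝ, 0 < δ ∧ ∀ t ∈ T, δ ≤ rt t / 2 := by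
    have hFne : hTfin.toFinset.Nonempty := by
      rwa [Set.Finite.toFinset_nonempty]
    refine ⟨hTfin.toFinset.inf' hFne (fun t => rt t / 2), ?_, ?_⟩
    · rw [Finset.lt_inf'_iff]
      intro t ht
      exact half_pos (hrtpos t)
    · intro t ht
      exact Finset.inf'_le _ (by rwa [Set.Finite.mem_toFinset])
  have hmesh : ∀ s ∈ Icc (0:ℝ) 1, ∃ e : OpenPartialHomeomorph X Y, f = e ∧
      ∀ u ∈ Icc (0:ℝ) 1, dist u s ≤ δ → g₁ u ∈ e.source := by
    intro s hs
    obtain ⟨t, htT, hsball⟩ := mem_iUnion₂.mp (hTcov hs)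
    obtain ⟨e, hfe, hsource⟩ := hcov t (hTsub htT)
    refine ⟨e, hfe, fun u hu hd => hsource u hu ?_⟩
    have h1 : dist u t ≤ dist u s + dist s t := dist_triangle _ _ _
    have h2 : dist s t < rt t / 2 := Metric.mem_ball.mp hsball
    have h3 : δ ≤ rt t / 2 := hδle t htT
    linarith
  obtain ⟨n, hn⟩ := exists_nat_one_div_lt hδpos
  set m : ℕ := n + 1 with hm
  have hmpos : 0 < (m:ℝ) := by positivity
  set τ : ℕ → ℝ := fun i => (i : ℝ) / m with hτ
  have hτ0 : τ 0 = 0 := by simp [hτ]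
  have hτmono : ∀ i : ℕ, τ i ≤ τ (i + 1) := fun i =>
    (div_le_div_iff_of_pos_right hmpos).mpr (by exact_mod_cast Nat.le_succ i)
  have hτmem : ∀ i : ℕ, i ≤ m → τ i ∈ Icc (0:ℝ) 1 := by
    intro i him
    constructor
    · positivity
    · rw [div_le_one hmpos]
      exact_mod_cast him
  have hτstep : ∀ i : ℕ, τ (i + 1) - τ i ≤ δ := by
    intro i
    have : τ (i + 1) - τ i = 1 / m := by
      rw [hτ]; push_cast; ring
    rw [this]
    have : (1:ℝ) / m < δ := by exact_mod_cast hn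
    linarith
  -- the fixed first chart
  obtain ⟨e₀, he₀, hfe₀⟩ := hf (g₁ 0)
  have hKp₁0 : K p₁ 0 ∈ e₀.target := by
    rw [← hg₁ 0 ⟨le_rfl, zero_le_one⟩, hfe₀]
    exact e₀.map_source he₀
  -- continuity of slices
  have hKslice : ∀ s ∈ Icc (0:ℝ) 1, ContinuousOn (fun p => K p s) W := by
    intro s hs
    exact hK.comp ((continuous_id.prodMk continuous_const).continuousOn)
      (fun p hp => ⟨hp, hs⟩)
  have hKp : ∀ p ∈ W, ContinuousOn (fun t => K p t) (Icc 0 1) := by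
    intro p hp
    exact hK.comp ((continuous_const.prodMk continuous_id).continuousOn)
      (fun t ht => ⟨hp, ht⟩)
  -- main induction
  have main : ∀ i : ℕ, i ≤ m → ∃ (N : Set Z) (e' : OpenPartialHomeomorph X Y),
      IsOpen N ∧ p₁ ∈ N ∧ f = e' ∧ g₁ (τ i) ∈ e'.source ∧
      ∀ p ∈ N ∩ W, K p 0 ∈ e₀.target ∧ K p (τ i) ∈ e'.target ∧
        ∃ g : ℝ → X, ContinuousOn g (Icc 0 (τ i)) ∧
          (∀ t ∈ Icc 0 (τ i), f (g t) = K p t) ∧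
          g 0 = e₀.symm (K p 0) ∧ g (τ i) = e'.symm (K p (τ i)) := by
    intro i
    induction i with
    | zero =>
      intro _
      have hmem := (hKslice 0 ⟨le_rfl, zero_le_one⟩) p₁ hp₁ (e₀.open_target.mem_nhds hKp₁0)
      rw [Filter.mem_map, mem_nhdsWithin] at hmem
      obtain ⟨N, hNo, hpN, hNsub⟩ := hmem
      refine ⟨N, e₀, hNo, hpN, hfe₀, by rwa [hτ0], ?_⟩
      intro p hp
      have hKp0 : K p 0 ∈ e₀.target := hNsub hp
      refine ⟨hKp0, by rwa [hτ0], fun _ => e₀.symm (K p 0), continuousOn_const, ?_, rfl, by rw [hτ0]⟩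
      intro t ht
      rw [hτ0] at ht
      have : t = 0 := le_antisymm ht.2 ht.1
      rw [this, hfe₀]
      exact e₀.right_inv hKp0
    | succ i IH =>
      intro him
      obtain ⟨N, e', hNo, hpN, hfe', hg₁e', hIH⟩ := IH (Nat.le_of_succ_le him)
      have him' : i ≤ m := Nat.le_of_succ_le him
      have hτiI : τ i ∈ Icc (0:ℝ) 1 := hτmem i him'
      have hτi1I : τ (i+1) ∈ Icc (0:ℝ) 1 := hτmem (i+1) him
      have hIccsub : Icc (τ i) (τ (i+1)) ⊆ Icc (0:ℝ) 1 :=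
        fun u hu => ⟨hτiI.1.trans hu.1, hu.2.trans hτi1I.2⟩
      obtain ⟨e'', hfe'', hsrc⟩ := hmesh (τ i) hτiI
      have hseg : ∀ u ∈ Icc (τ i) (τ (i+1)), g₁ u ∈ e''.source := by
        intro u hu
        refine hsrc u (hIccsub hu) ?_
        rw [Real.dist_eq, abs_of_nonneg (by linarith [hu.1])]
        linarith [hτstep i, hu.2]
      have htube : ∀ u ∈ Icc (τ i) (τ (i+1)), (fun q : Z × ℝ => K q.1 q.2) (p₁, u) ∈ e''.target := by
        intro u hu
        have := hg₁ u (hIccsub hu)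
        simp only []
        rw [← this, hfe'']
        exact e''.map_source (hseg u hu)
      obtain ⟨N₁, hN₁o, hpN₁, hN₁⟩ := tube_lemma' hK hp₁ isCompact_Icc hIccsub
        e''.open_target htube
      -- matching neighborhood
      have hcm : ContinuousOn (fun p => e'.symm (K p (τ i))) (N ∩ W) := by
        refine e'.continuousOn_symm.comp ((hKslice (τ i) hτiI).mono inter_subset_right) ?_
        intro p hp
        exact (hIH p hp).2.1
      have hval : e'.symm (K p₁ (τ i)) = g₁ (τ i) := by
        have h1 : K p₁ (τ i) = e' (g₁ (τ i)) := by rw [← hg₁ (τ i) hτiI, hfe']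
        rw [h1, e'.left_inv hg₁e']
      have hmem2 := hcm p₁ ⟨hpN, hp₁⟩ (e''.open_source.mem_nhds (by
        show e'.symm (K p₁ (τ i)) ∈ e''.source
        rw [hval]; exact hseg (τ i) ⟨le_rfl, hτmono i⟩))
      rw [Filter.mem_map, mem_nhdsWithin] at hmem2
      obtain ⟨N₂, hN₂o, hpN₂, hN₂⟩ := hmem2
      refine ⟨N ∩ N₁ ∩ N₂, e'', (hNo.inter hN₁o).inter hN₂o, ⟨⟨hpN, hpN₁⟩, hpN₂⟩, hfe'',
        hseg (τ (i+1)) ⟨hτmono i, le_rfl⟩, ?_⟩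
      intro p hp
      obtain ⟨⟨⟨hpN', hpN₁'⟩, hpN₂'⟩, hpW⟩ := hp
      obtain ⟨hK0, hKτ, g, hgc, hglift, hg0, hgτ⟩ := hIH p ⟨hpN', hpW⟩
      have hmatch : e'.symm (K p (τ i)) ∈ e''.source := hN₂ ⟨hpN₂', hpN', hpW⟩
      have hKt : ∀ u ∈ Icc (τ i) (τ (i+1)), K p u ∈ e''.target :=
        fun u hu => hN₁ p ⟨hpN₁', hpW⟩ u hu
      have heq : g (τ i) = e''.symm (K p (τ i)) := by
        rw [hgτ]
        have h1 : e'' (e'.symm (K p (τ i))) = K p (τ i) := by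
          calc e'' (e'.symm (K p (τ i))) = f (e'.symm (K p (τ i))) := (congrFun hfe'' _).symm
            _ = e' (e'.symm (K p (τ i))) := congrFun hfe' _
            _ = K p (τ i) := e'.right_inv hKτ
        have h2 := e''.left_inv hmatch
        rw [h1] at h2
        exact h2.symm
      refine ⟨hK0, hKt (τ (i+1)) ⟨hτmono i, le_rfl⟩,
        fun t => if t ≤ τ i then g t else e''.symm (K p t), ?_, ?_, ?_, ?_⟩
      · exact glue_cont hgc (e''.continuousOn_symm.comp ((hKp p hpW).mono hIccsub) hKt)
          (by rw [heq])
      · intro t ht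
        change f (if t ≤ τ i then g t else e''.symm (K p t)) = K p t
        by_cases hc : t ≤ τ i
        · rw [if_pos hc]; exact hglift t ⟨ht.1, hc⟩
        · rw [if_neg hc, hfe'']
          exact e''.right_inv (hKt t ⟨(not_le.mp hc).le, ht.2⟩)
      · change (if (0:ℝ) ≤ τ i then g 0 else e''.symm (K p 0)) = e₀.symm (K p 0)
        rw [if_pos hτiI.1]; exact hg0
      · change (if τ (i+1) ≤ τ i then g (τ (i+1)) else e''.symm (K p (τ (i+1))))
          = e''.symm (K p (τ (i+1)))
        rw [if_neg (not_le.mpr ((div_lt_div_iff_of_pos_right hmpos).mpr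
          (by exact_mod_cast Nat.lt_succ_self i)))]
  obtain ⟨N, eN, hNo, hpN, hfeN, hg₁eN, hmain⟩ := main m le_rfl
  have hτm : τ m = 1 := by rw [hτ]; exact div_self (ne_of_gt hmpos)
  rw [hτm] at hg₁eN hmain
  exact ⟨N, e₀, eN, hNo, hpN, hfe₀, hfeN, he₀, hg₁eN, hmain⟩

end Chain

section Assembly

variable {X Y : Type*} [MetricSpace X] [MetricSpace Y] {f : X → Y}

theorem fiber_discrete (hf : IsLocalHomeomorph f) (y₁ : Y) :
    DiscreteTopology (f ⁻¹' {y₁} : Set X) := by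
  rw [discreteTopology_iff_isOpen_singleton]
  rintro ⟨z, hz⟩
  obtain ⟨e, he, hfe⟩ := hf z
  have heq : (Subtype.val ⁻¹' e.source : Set (f ⁻¹' {y₁})) = {⟨z, hz⟩} := by
    ext w
    simp only [mem_preimage, mem_singleton_iff]
    constructor
    · intro hw
      apply Subtype.ext
      apply e.injOn hw he
      rw [← hfe]
      have h1 : f w.1 = y₁ := w.2
      have h2 : f z = y₁ := hz
      rw [← hfe] at *
      rw [h1, h2]
    · intro hw; rw [hw]; exact he
  have : IsOpen (Subtype.val ⁻¹' e.source : Set (f ⁻¹' {y₁})) :=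
    e.open_source.preimage continuous_subtype_val
  rwa [heq] at this

theorem antitoneOn_one_sub : AntitoneOn (fun t : ℝ => 1 - t) (Icc 0 1) :=
  fun _ _ _ _ hab => by simp only []; linarith

theorem mapsTo_one_sub : MapsTo (fun t : ℝ => 1 - t) (Icc (0:ℝ) 1) (Icc 0 1) := by
  intro t ht
  obtain ⟨h0, h1⟩ := ht
  simp only [mem_Icc]
  constructor <;> linarith

theorem surj_aux [CompleteSpace X] [PathConnectedSpace Y]
    (hf : IsLocalHomeomorph f) (hY : LocallyRContractible Y)
    (h1 : ∀ B : Set X, Bornology.IsBounded B → 0 < ⨅ x ∈ B, lowerDeriv f x)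
    (h2 : ∃ (y₀ : Y) (x₀ : X), ∀ R : ℝ, 0 < R → ∃ r : ℝ, 0 < r ∧
      ∀ x : X, r < dist x x₀ → R < dist (f x) y₀)
    (hXne : Nonempty X) : Function.Surjective f := by
  have hco : IsClopen (range f) := by
    constructor
    · refine isClosed_of_closure_subset ?_
      intro y hy
      obtain ⟨U, hUo, hyU, H, hHc, hHmap, hHcen, hHends, hHvar⟩ := hY y
      obtain ⟨y', hy'U, x', hx'⟩ : ∃ y' ∈ U, ∃ x', f x' = y' := by
        obtain ⟨y', hy'U, xx, hxx⟩ := mem_closure_iff.mp hy U hUo hyU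
        exact ⟨y', hy'U, xx, hxx⟩
      have hHyc : ContinuousOn (H y') (Icc 0 1) :=
        hHc.comp ((continuous_const.prodMk continuous_id).continuousOn)
          (fun t ht => ⟨hy'U, ht⟩)
      have hrevc : ContinuousOn (fun t => H y' (1 - t)) (Icc 0 1) :=
        hHyc.comp ((continuous_const.sub continuous_id).continuousOn) mapsTo_one_sub
      have hrevvar : eVariationOn (fun t => H y' (1 - t)) (Icc 0 1) ≠ ⊤ := by
        have hle : eVariationOn ((H y') ∘ (fun t => 1 - t)) (Icc 0 1) ≤
            eVariationOn (H y') (Icc 0 1) :=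
          eVariationOn.comp_le_of_antitoneOn _ _ antitoneOn_one_sub mapsTo_one_sub
        exact (lt_of_le_of_lt hle (hHvar y' hy'U).lt_top).ne
      obtain ⟨g, hgc, hg0, hglift⟩ := exists_lift hf h1 h2 hrevc hrevvar (x := x')
        (by rw [sub_zero, (hHends y' hy'U).2]; exact hx')
      refine ⟨g 1, ?_⟩
      rw [hglift 1 ⟨zero_le_one, le_rfl⟩, sub_self]
      exact (hHends y' hy'U).1
    · exact hf.isOpenMap.isOpen_range
  rw [← range_eq_univ]
  exact hco.eq_univ (range_nonempty f)

end Assembly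

/-- a local homeomorphism `f : X → Y`, `X` complete, `Y` path-connected
and locally contractible via rectifiable paths, such that (1) `inf_{x ∈ B} D⁻ₓ f > 0`
for every bounded `B ⊆ X`, and (2) `d(f x, y₀) → ∞` as `d(x, x₀) → ∞` for some
`x₀ ∈ X`, `y₀ ∈ Y`, is a covering projection. -/
theorem stmt15 {X Y : Type*} [MetricSpace X] [MetricSpace Y] [CompleteSpace X]
    [PathConnectedSpace Y]
    (f : X → Y) (hf : IsLocalHomeomorph f)
    (hY : LocallyRContractible Y)
    (h1 : ∀ B : Set X, Bornology.IsBounded B → 0 < ⨅ x ∈ B, lowerDeriv f x)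
    (h2 : ∃ (y₀ : Y) (x₀ : X), ∀ R : ℝ, 0 < R → ∃ r : ℝ, 0 < r ∧
      ∀ x : X, r < dist x x₀ → R < dist (f x) y₀) :
    IsCoveringMap f := by
  classical
  have hXne : Nonempty X := by obtain ⟨_, x₀, _⟩ := h2; exact ⟨x₀⟩
  have hsurj := surj_aux hf hY h1 h2 hXne
  intro y₁
  obtain ⟨U, hUo, hy₁U, H, hHc, hHmap, hHcen, hHends, hHvar⟩ := hY y₁
  have hHyc : ∀ y ∈ U, ContinuousOn (H y) (Icc 0 1) := fun y hy =>
    hHc.comp ((continuous_const.prodMk continuous_id).continuousOn) (fun t ht => ⟨hy, ht⟩)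
  have hHyrevc : ∀ y ∈ U, ContinuousOn (fun t => H y (1 - t)) (Icc 0 1) := fun y hy =>
    (hHyc y hy).comp ((continuous_const.sub continuous_id).continuousOn) mapsTo_one_sub
  have hrevvar : ∀ y ∈ U, eVariationOn (fun t => H y (1 - t)) (Icc 0 1) ≠ ⊤ := by
    intro y hy
    have hle : eVariationOn ((H y) ∘ (fun t => 1 - t)) (Icc 0 1) ≤
        eVariationOn (H y) (Icc 0 1) :=
      eVariationOn.comp_le_of_antitoneOn _ _ antitoneOn_one_sub mapsTo_one_sub
    exact (lt_of_le_of_lt hle (hHvar y hy).lt_top).ne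
  -- canonical forward lifts
  have hfwd : ∀ (x : X) (y : Y), ∃ g : ℝ → X, (f x = y₁ ∧ y ∈ U) →
      ContinuousOn g (Icc 0 1) ∧ g 0 = x ∧ ∀ t ∈ Icc 0 1, f (g t) = H y t := by
    intro x y
    by_cases h : f x = y₁ ∧ y ∈ U
    · obtain ⟨g, hg⟩ := exists_lift hf h1 h2 (hHyc y h.2) (hHvar y h.2) (x := x)
        (by rw [(hHends y h.2).1]; exact h.1)
      exact ⟨g, fun _ => hg⟩
    · exact ⟨fun _ => x, fun h' => absurd h' h⟩
  choose G hG using hfwd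
  -- canonical reverse lifts
  have hrev : ∀ z : X, ∃ g : ℝ → X, f z ∈ U →
      ContinuousOn g (Icc 0 1) ∧ g 0 = z ∧ ∀ t ∈ Icc 0 1, f (g t) = H (f z) (1 - t) := by
    intro z
    by_cases h : f z ∈ U
    · obtain ⟨g, hg⟩ := exists_lift hf h1 h2 (hHyrevc (f z) h) (hrevvar (f z) h) (x := z)
        (by rw [sub_zero, (hHends (f z) h).2])
      exact ⟨g, fun _ => hg⟩
    · exact ⟨fun _ => z, fun h' => absurd h' h⟩
  choose Gr hGr using hrev
  have hGrfiber : ∀ z : X, f z ∈ U → f (Gr z 1) = y₁ := by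
    intro z hz
    rw [(hGr z hz).2.2 1 ⟨zero_le_one, le_rfl⟩, sub_self]
    exact (hHends (f z) hz).1
  have hfwd_f : ∀ (x : X) (y : Y), (f x = y₁ ∧ y ∈ U) → f (G x y 1) = y := by
    intro x y h
    rw [(hG x y h).2.2 1 ⟨zero_le_one, le_rfl⟩]
    exact (hHends y h.2).2
  -- left inverse
  have hGrG : ∀ z : X, f z ∈ U → G (Gr z 1) (f z) 1 = z := by
    intro z hz
    have hh : f (Gr z 1) = y₁ ∧ f z ∈ U := ⟨hGrfiber z hz, hz⟩
    have hφc : ContinuousOn (fun t => Gr z (1 - t)) (Icc 0 1) :=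
      (hGr z hz).1.comp ((continuous_const.sub continuous_id).continuousOn) mapsTo_one_sub
    have huni := lift_unique hf isPreconnected_Icc (hG (Gr z 1) (f z) hh).1 hφc
      (fun t ht => by
        rw [(hG (Gr z 1) (f z) hh).2.2 t ht, (hGr z hz).2.2 (1 - t) (mapsTo_one_sub ht)]
        congr 1
        ring)
      ⟨le_rfl, zero_le_one⟩
      (by rw [(hG (Gr z 1) (f z) hh).2.1, sub_zero])
    have h11 : G (Gr z 1) (f z) 1 = Gr z (1 - 1) := huni ⟨zero_le_one, le_rfl⟩
    rw [h11, sub_self, (hGr z hz).2.1]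
  -- right inverse
  have hGGr : ∀ (x : X) (y : Y), (f x = y₁ ∧ y ∈ U) → Gr (G x y 1) 1 = x := by
    intro x y h
    have hz : f (G x y 1) = y := hfwd_f x y h
    have hzU : f (G x y 1) ∈ U := by rw [hz]; exact h.2
    have hψc : ContinuousOn (fun t => G x y (1 - t)) (Icc 0 1) :=
      (hG x y h).1.comp ((continuous_const.sub continuous_id).continuousOn) mapsTo_one_sub
    have huni := lift_unique hf isPreconnected_Icc (hGr (G x y 1) hzU).1 hψc
      (fun t ht => by
        rw [(hGr (G x y 1) hzU).2.2 t ht, (hG x y h).2.2 (1 - t) (mapsTo_one_sub ht), hz])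
      ⟨le_rfl, zero_le_one⟩
      (by rw [(hGr (G x y 1) hzU).2.1, sub_zero])
    have h11 : Gr (G x y 1) 1 = G x y (1 - 1) := huni ⟨zero_le_one, le_rfl⟩
    rw [h11, sub_self, (hG x y h).2.1]
  obtain ⟨xb, hxb⟩ := hsurj y₁
  have hxb' : xb ∈ f ⁻¹' {y₁} := hxb
  have hdisc := fiber_discrete hf y₁
  set Φ₂ : X → (f ⁻¹' {y₁} : Set X) := fun z =>
    if hz : f z ∈ U then ⟨Gr z 1, hGrfiber z hz⟩ else ⟨xb, hxb'⟩ with hΦ₂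
  have hΦ₂pos : ∀ (z : X) (hz : f z ∈ U), Φ₂ z = ⟨Gr z 1, hGrfiber z hz⟩ :=
    fun z hz => dif_pos hz
  -- local constancy of the fiber coordinate
  have hconstaux : ∀ z₁ : X, f z₁ ∈ U → ∃ Nz, IsOpen Nz ∧ z₁ ∈ Nz ∧
      ∃ xc : X, ∀ z ∈ Nz, f z ∈ U → Gr z 1 = xc := by
    intro z₁ hz₁
    have hKc : ContinuousOn (fun q : X × ℝ => H (f q.1) (1 - q.2)) ((f ⁻¹' U) ×ˢ Icc 0 1) :=
      hHc.comp (((hf.continuous.comp continuous_fst).prodMk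
        (continuous_const.sub continuous_snd)).continuousOn)
        (fun q hq => ⟨hq.1, mapsTo_one_sub hq.2⟩)
    obtain ⟨N, e₀, eN, hNo, hpN, hfe₀, hfeN, hstart, hend, hmain⟩ :=
      chain_lift hf (W := f ⁻¹' U) (K := fun z t => H (f z) (1 - t)) hKc hz₁ (hGr z₁ hz₁).1
        (fun t ht => (hGr z₁ hz₁).2.2 t ht)
    have hz₁e₀ : z₁ ∈ e₀.source := (hGr z₁ hz₁).2.1 ▸ hstart
    refine ⟨N ∩ e₀.source, hNo.inter e₀.open_source, ⟨hpN, hz₁e₀⟩, eN.symm y₁, ?_⟩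
    intro z hz hzU
    obtain ⟨hK0, hK1, g, hgc, hglift, hg0, hg1⟩ := hmain z ⟨hz.1, hzU⟩
    have hg0' : g 0 = z := by
      have hA : H (f z) (1 - (0:ℝ)) = e₀ z := by
        rw [sub_zero, (hHends (f z) hzU).2]; exact congrFun hfe₀ z
      rw [hg0, hA]
      exact e₀.left_inv hz.2
    have huni := lift_unique hf isPreconnected_Icc hgc (hGr z hzU).1
      (fun t ht => by rw [hglift t ht, (hGr z hzU).2.2 t ht]) ⟨le_rfl, zero_le_one⟩
      (by rw [hg0', (hGr z hzU).2.1])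
    have h11 : g 1 = Gr z 1 := huni ⟨zero_le_one, le_rfl⟩
    rw [← h11, hg1, sub_self, (hHends (f z) hzU).1]
  -- local form of the inverse map
  have hΨloc : ∀ (x : X), f x = y₁ → ∀ y' ∈ U, ∃ (Ny : Set Y) (eN : OpenPartialHomeomorph X Y),
      IsOpen Ny ∧ y' ∈ Ny ∧ f = eN ∧ ∀ y ∈ Ny ∩ U, y ∈ eN.target ∧ G x y 1 = eN.symm y := by
    intro x hx y' hy'
    obtain ⟨N, e₀, eN, hNo, hpN, hfe₀, hfeN, hstart, hend, hmain⟩ :=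
      chain_lift hf (W := U) (K := H) hHc hy' (hG x y' ⟨hx, hy'⟩).1
        (fun t ht => (hG x y' ⟨hx, hy'⟩).2.2 t ht)
    have hxe₀ : x ∈ e₀.source := (hG x y' ⟨hx, hy'⟩).2.1 ▸ hstart
    refine ⟨N, eN, hNo, hpN, hfeN, ?_⟩
    intro y hy
    obtain ⟨hK0, hK1, g, hgc, hglift, hg0, hg1⟩ := hmain y hy
    have hg0' : g 0 = x := by
      have hA : H y 0 = e₀ x := by rw [(hHends y hy.2).1, ← hx]; exact congrFun hfe₀ x
      rw [hg0, hA]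
      exact e₀.left_inv hxe₀
    have huni := lift_unique hf isPreconnected_Icc hgc (hG x y ⟨hx, hy.2⟩).1
      (fun t ht => by rw [hglift t ht, (hG x y ⟨hx, hy.2⟩).2.2 t ht]) ⟨le_rfl, zero_le_one⟩
      (by rw [hg0', (hG x y ⟨hx, hy.2⟩).2.1])
    have h11 : g 1 = G x y 1 := huni ⟨zero_le_one, le_rfl⟩
    constructor
    · rw [← (hHends y hy.2).2]; exact hK1
    · rw [← h11, hg1, (hHends y hy.2).2]
  have hcont_to : ContinuousOn (fun z => (f z, Φ₂ z)) (f ⁻¹' U) := by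
    apply (hf.continuous.continuousOn).prodMk
    intro z₁ hz₁
    obtain ⟨Nz, hNzo, hz₁Nz, xc, hconst⟩ := hconstaux z₁ hz₁
    rw [← continuousWithinAt_inter (hNzo.mem_nhds hz₁Nz)]
    have heqΦ : ∀ z ∈ (f ⁻¹' U) ∩ Nz, Φ₂ z = Φ₂ z₁ := by
      intro z hz
      rw [hΦ₂pos z hz.1, hΦ₂pos z₁ hz₁]
      exact Subtype.ext ((hconst z hz.2 hz.1).trans (hconst z₁ hz₁Nz hz₁).symm)
    exact ContinuousWithinAt.congr continuousWithinAt_const heqΦ rfl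
  have hcont_inv : ContinuousOn (fun q : Y × (f ⁻¹' {y₁} : Set X) => G q.2.1 q.1 1)
      (U ×ˢ univ) := by
    rintro ⟨y', x⟩ hq
    have hx : f x.1 = y₁ := x.2
    obtain ⟨Ny, eN, hNyo, hy'Ny, hfeN, hprop⟩ := hΨloc x.1 hx y' hq.1
    have hxopen : IsOpen ({x} : Set (f ⁻¹' {y₁} : Set X)) := isOpen_discrete _
    rw [← continuousWithinAt_inter ((hNyo.prod hxopen).mem_nhds
      (⟨hy'Ny, rfl⟩ : (y', x) ∈ Ny ×ˢ {x}))]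
    have hmapsTo : ∀ q ∈ (U ×ˢ (univ : Set (f ⁻¹' {y₁} : Set X))) ∩ (Ny ×ˢ {x}),
        (q : Y × _).1 ∈ eN.target := fun q hq' => (hprop q.1 ⟨hq'.2.1, hq'.1.1⟩).1
    refine ContinuousWithinAt.congr
      (f := fun q : Y × (f ⁻¹' {y₁} : Set X) => eN.symm q.1) ?_ ?_ ?_
    · exact (eN.continuousOn_symm.comp (continuous_fst.continuousOn) hmapsTo)
        (y', x) ⟨⟨hq.1, trivial⟩, hy'Ny, rfl⟩
    · intro q hq'
      obtain ⟨⟨hqU, -⟩, hqN, hqx⟩ := hq'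
      have hq2 : q.2 = x := hqx
      rw [hq2]
      exact (hprop q.1 ⟨hqN, hqU⟩).2
    · exact (hprop y' ⟨hy'Ny, hq.1⟩).2
  refine @IsEvenlyCovered.of_trivialization _ _ _ _ _ _ _ hdisc _
    ⟨⟨⟨⟨fun z => (f z, Φ₂ z), fun q => G q.2.1 q.1 1, f ⁻¹' U, U ×ˢ univ,
      ?_, ?_, ?_, ?_⟩, hcont_to, hcont_inv⟩, hUo.preimage hf.continuous,
      hUo.prod isOpen_univ⟩, U, hUo, rfl, rfl, fun z _ => rfl⟩ hy₁U
  · -- map_source'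
    intro z hz
    exact ⟨hz, mem_univ _⟩
  · -- map_target'
    intro q hq
    show f (G q.2.1 q.1 1) ∈ U
    rw [hfwd_f q.2.1 q.1 ⟨q.2.2, hq.1⟩]
    exact hq.1
  · -- left_inv'
    intro z hz
    show G (Φ₂ z).1 (f z) 1 = z
    rw [hΦ₂pos z hz]
    exact hGrG z hz
  · -- right_inv'
    rintro ⟨y, x⟩ hq
    show (f (G x.1 y 1), Φ₂ (G x.1 y 1)) = (y, x)
    have hA : f (G x.1 y 1) = y := hfwd_f x.1 y ⟨x.2, hq.1⟩
    have hzU : f (G x.1 y 1) ∈ U := by rw [hA]; exact hq.1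
    have hB : Φ₂ (G x.1 y 1) = x := by
      rw [hΦ₂pos _ hzU]
      exact Subtype.ext (hGGr x.1 y ⟨x.2, hq.1⟩)
    rw [Prod.mk.injEq]
    exact ⟨hA, hB⟩
end
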